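/- arXiv:1910.13285 — 4 statements merged into one kernel-verified Lean document; each statement's English description precedes it below -/
import Mathlib

section
/- Let n ≥ 1, 1 ≤ p < ∞, 0 ≤ λ < n, let w be a weight on ℝⁿ, and let α < λ be a real number. There is a constant C depending only on α, λ and p such that for every nonnegative measurable function f with ‖f‖_{L^{p,λ}(|x|^α w)} < ∞ and every r > 0 one has ( ∫_{B(0,r)} f^p w )^{1/p} ≤ C r^{(λ−α)/p} ‖f‖_{L^{p,λ}(|x|^α w)}. -/
open MeasureTheory Metric ENNReal NNReal Topology Filter

noncomputable section

/-- Euclidean space ℝⁿ. -/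
abbrev Euc (n : ℕ) := EuclideanSpace ℝ (Fin n)

/-- A weight on ℝⁿ: a nonnegative locally integrable function. -/
def IsWeight (n : ℕ) (w : Euc n → ℝ) : Prop :=
  (∀ x, 0 ≤ w x) ∧ LocallyIntegrable w volume

/-- `w(A) = ∫_A w`. -/
def wInt (n : ℕ) (w : Euc n → ℝ) (s : Set (Euc n)) : ℝ≥0∞ :=
  ∫⁻ y in s, ENNReal.ofReal (w y)

/-- The `A_q` constant for `1 < q`:
`sup_B (w(B)/|B|) ((w^{1-q'}(B))/|B|)^{q-1}` with `q' = q/(q-1)`. -/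
def ApConst (n : ℕ) (q : ℝ) (w : Euc n → ℝ) : ℝ≥0∞ :=
  ⨆ (x : Euc n) (r : ℝ) (_ : 0 < r),
    (wInt n w (ball x r) / volume (ball x r)) *
      (wInt n (fun y => w y ^ (1 - q / (q - 1))) (ball x r) / volume (ball x r)) ^ (q - 1)

/-- The `A_1` constant: the least `c` such that for every ball `B`,
`w(B)/|B| ≤ c w(x)` for a.e. `x ∈ B`. -/
def A1Const (n : ℕ) (w : Euc n → ℝ) : ℝ≥0∞ :=
  sInf {c : ℝ≥0∞ | ∀ (x : Euc n) (r : ℝ), 0 < r →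
    ∀ᵐ y ∂(volume.restrict (ball x r)),
      wInt n w (ball x r) / volume (ball x r) ≤ c * ENNReal.ofReal (w y)}

/-- The Muckenhoupt constant `[w]_{A_q}` (for `q = 1` the `A_1` constant). -/
def muckConst (n : ℕ) (q : ℝ) (w : Euc n → ℝ) : ℝ≥0∞ :=
  if q = 1 then A1Const n w else ApConst n q w

/-- Membership in the Muckenhoupt class `A_q`. -/
def MemAp (n : ℕ) (q : ℝ) (w : Euc n → ℝ) : Prop := muckConst n q w < ⊤

/-- The reverse Hölder `RH_σ` constant: the least `c` such that
`(|B|⁻¹ ∫_B w^σ)^{1/σ} ≤ c |B|⁻¹ ∫_B w` for all balls `B`. -/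
def RHConst (n : ℕ) (σ : ℝ) (w : Euc n → ℝ) : ℝ≥0∞ :=
  sInf {c : ℝ≥0∞ | ∀ (x : Euc n) (r : ℝ), 0 < r →
    ((volume (ball x r))⁻¹ * ∫⁻ y in ball x r, ENNReal.ofReal (w y ^ σ)) ^ (1 / σ) ≤
      c * ((volume (ball x r))⁻¹ * wInt n w (ball x r))}

/-- Membership in the reverse Hölder class `RH_σ`. -/
def MemRH (n : ℕ) (σ : ℝ) (w : Euc n → ℝ) : Prop := RHConst n σ w < ⊤

/-- `‖f‖_{L^p(w)} = (∫ |f|^p w)^{1/p}`. -/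
def lpNorm (n : ℕ) (p : ℝ) (w f : Euc n → ℝ) : ℝ≥0∞ :=
  (∫⁻ x, ENNReal.ofReal (|f x| ^ p * w x)) ^ (1 / p)

/-- `‖g‖_{L^{p,∞}(w)} = sup_{t>0} t (w{|g|>t})^{1/p}`. -/
def weakLpNorm (n : ℕ) (p : ℝ) (w g : Euc n → ℝ) : ℝ≥0∞ :=
  ⨆ (t : ℝ) (_ : 0 < t), ENNReal.ofReal t * (wInt n w {x | t < |g x|}) ^ (1 / p)

/-- The Morrey norm `‖f‖_{L^{p,λ}(u)} = sup_{x,r>0} (r^{-λ} ∫_{B(x,r)} |f|^p u)^{1/p}`. -/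
def morreyNorm (n : ℕ) (p lam : ℝ) (u f : Euc n → ℝ) : ℝ≥0∞ :=
  ⨆ (x : Euc n) (r : ℝ) (_ : 0 < r),
    (ENNReal.ofReal (r ^ (-lam)) *
      ∫⁻ y in ball x r, ENNReal.ofReal (|f y| ^ p * u y)) ^ (1 / p)

/-- The weak Morrey norm
`‖f‖_{WL^{p,λ}(u)} = sup_{x,r>0,t>0} (t^p u({y ∈ B(x,r) : |f y| > t}) / r^λ)^{1/p}`. -/
def weakMorreyNorm (n : ℕ) (p lam : ℝ) (u f : Euc n → ℝ) : ℝ≥0∞ :=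
  ⨆ (x : Euc n) (r : ℝ) (_ : 0 < r) (t : ℝ) (_ : 0 < t),
    (ENNReal.ofReal (t ^ p) * ENNReal.ofReal (r ^ (-lam)) *
      wInt n u {y ∈ ball x r | t < |f y|}) ^ (1 / p)

/-- The Hardy–Littlewood maximal function `Mf(x) = sup_{B ∋ x} |B|⁻¹ ∫_B |f|`. -/
def maximal (n : ℕ) (f : Euc n → ℝ) (x : Euc n) : ℝ≥0∞ :=
  ⨆ (z : Euc n) (r : ℝ) (_ : 0 < r) (_ : x ∈ ball z r),
    (volume (ball z r))⁻¹ * ∫⁻ y in ball z r, ENNReal.ofReal |f y|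

/-- Morrey norm for an `ℝ≥0∞`-valued function (e.g. a maximal function). -/
def morreyNormE (n : ℕ) (p lam : ℝ) (u : Euc n → ℝ) (g : Euc n → ℝ≥0∞) : ℝ≥0∞ :=
  ⨆ (x : Euc n) (r : ℝ) (_ : 0 < r),
    (ENNReal.ofReal (r ^ (-lam)) *
      ∫⁻ y in ball x r, (g y) ^ p * ENNReal.ofReal (u y)) ^ (1 / p)

/-- Weak Morrey norm for an `ℝ≥0∞`-valued function (e.g. a maximal function). -/
def weakMorreyNormE (n : ℕ) (p lam : ℝ) (u : Euc n → ℝ) (g : Euc n → ℝ≥0∞) : ℝ≥0∞ :=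
  ⨆ (x : Euc n) (r : ℝ) (_ : 0 < r) (t : ℝ) (_ : 0 < t),
    (ENNReal.ofReal (t ^ p) * ENNReal.ofReal (r ^ (-lam)) *
      wInt n u {y ∈ ball x r | ENNReal.ofReal t < g y}) ^ (1 / p)

end

/-- the basic estimate `(∫_{B(0,r)} f^p w)^{1/p} ≤ C r^{(λ-α)/p} ‖f‖_{L^{p,λ}(|x|^α w)}`
for `α < λ`, with `C` depending only on `α`, `λ` and `p`. -/
theorem statement9 (p lam α : ℝ) (hp : 1 ≤ p) (hα : α < lam) :
    ∃ C : ℝ≥0∞, C < ⊤ ∧ ∀ (n : ℕ), 1 ≤ n → 0 ≤ lam → lam < (n : ℝ) →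
      ∀ w : Euc n → ℝ, IsWeight n w →
      ∀ f : Euc n → ℝ, Measurable f → (∀ x, 0 ≤ f x) →
      morreyNorm n p lam (fun x => ‖x‖ ^ α * w x) f < ⊤ →
      ∀ r : ℝ, 0 < r →
      (∫⁻ y in ball (0 : Euc n) r, ENNReal.ofReal (f y ^ p * w y)) ^ (1 / p) ≤
        C * ENNReal.ofReal (r ^ ((lam - α) / p)) *
          morreyNorm n p lam (fun x => ‖x‖ ^ α * w x) f := by
  have hp0 : 0 < p := lt_of_lt_of_le one_pos hp
  set q : ℝ := (2:ℝ) ^ (α - lam) with hqdef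
  have hq1 : q < 1 := Real.rpow_lt_one_of_one_lt_of_neg one_lt_two (by linarith)
  have hq0 : 0 < q := Real.rpow_pos_of_pos two_pos _
  set C0 : ℝ≥0∞ := ENNReal.ofReal ((2:ℝ) ^ (|α| + α)) * (1 - ENNReal.ofReal q)⁻¹ with hC0
  have hsub : (1 : ℝ≥0∞) - ENNReal.ofReal q ≠ 0 := by
    rw [ne_eq, tsub_eq_zero_iff_le, not_le]
    exact ENNReal.ofReal_lt_one.2 hq1
  have hC0top : C0 ≠ ⊤ :=
    ENNReal.mul_ne_top ENNReal.ofReal_ne_top (ENNReal.inv_ne_top.2 hsub)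
  refine ⟨C0 ^ (1/p), ENNReal.rpow_lt_top_of_nonneg (by positivity) hC0top, ?_⟩
  intro n hn hlam0 hlamn w hw f hf hf0 hM r hr
  set u : Euc n → ℝ := fun x => ‖x‖ ^ α * w x with hu
  set M : ℝ≥0∞ := morreyNorm n p lam u f with hMdef
  -- ball estimate from the Morrey norm
  have hball : ∀ ρ : ℝ, 0 < ρ →
      (∫⁻ y in ball (0:Euc n) ρ, ENNReal.ofReal (f y ^ p * u y)) ≤
        ENNReal.ofReal (ρ ^ lam) * M ^ p := by
    intro ρ hρ
    have habs : (fun y => ENNReal.ofReal (|f y| ^ p * u y))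
        = fun y => ENNReal.ofReal (f y ^ p * u y) := by
      funext y; rw [abs_of_nonneg (hf0 y)]
    have h1 : (ENNReal.ofReal (ρ ^ (-lam)) *
        ∫⁻ y in ball (0:Euc n) ρ, ENNReal.ofReal (f y ^ p * u y)) ^ (1/p) ≤ M := by
      rw [hMdef, morreyNorm, ← habs]
      exact le_iSup_of_le (0:Euc n) (le_iSup_of_le ρ (le_iSup_of_le hρ le_rfl))
    have h2 : ENNReal.ofReal (ρ ^ (-lam)) *
        (∫⁻ y in ball (0:Euc n) ρ, ENNReal.ofReal (f y ^ p * u y)) ≤ M ^ p := by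
      have := ENNReal.rpow_le_rpow h1 hp0.le
      rwa [← ENNReal.rpow_mul, one_div_mul_cancel hp0.ne', ENNReal.rpow_one] at this
    have hone : ENNReal.ofReal (ρ ^ lam) * ENNReal.ofReal (ρ ^ (-lam)) = 1 := by
      rw [← ENNReal.ofReal_mul (by positivity), ← Real.rpow_add hρ, add_neg_cancel,
        Real.rpow_zero, ENNReal.ofReal_one]
    calc (∫⁻ y in ball (0:Euc n) ρ, ENNReal.ofReal (f y ^ p * u y))
        = ENNReal.ofReal (ρ ^ lam) * (ENNReal.ofReal (ρ ^ (-lam)) *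
            ∫⁻ y in ball (0:Euc n) ρ, ENNReal.ofReal (f y ^ p * u y)) := by
          rw [← mul_assoc, hone, one_mul]
      _ ≤ ENNReal.ofReal (ρ ^ lam) * M ^ p := mul_le_mul_right h2 _
  -- annuli
  set A : ℕ → Set (Euc n) := fun k =>
    ball (0:Euc n) (r * (2:ℝ) ^ (-(k:ℝ))) \ ball (0:Euc n) (r * (2:ℝ) ^ (-((k:ℝ)+1))) with hA
  have hcov : ball (0:Euc n) r ⊆ {0} ∪ ⋃ k, A k := by
    intro y hy
    rcases eq_or_ne y 0 with h0 | h0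
    · exact Or.inl h0
    refine Or.inr (Set.mem_iUnion.2 ?_)
    have hy0 : 0 < ‖y‖ := norm_pos_iff.2 h0
    have hyr : ‖y‖ < r := by simpa [mem_ball, dist_eq_norm] using hy
    have hpow : ∀ m : ℕ, (2:ℝ) ^ (-(m:ℝ)) = (1/2:ℝ) ^ m := by
      intro m
      rw [Real.rpow_neg (by norm_num), Real.rpow_natCast, one_div, inv_pow]
    have hex : ∃ m : ℕ, r * (2:ℝ) ^ (-((m:ℝ)+1)) ≤ ‖y‖ := by
      obtain ⟨m, hm⟩ := exists_pow_lt_of_lt_one (div_pos hy0 hr) (by norm_num : (1/2:ℝ) < 1)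
      refine ⟨m, ?_⟩
      have h1 : r * (1/2:ℝ)^m < ‖y‖ := by
        rw [← lt_div_iff₀' hr]; rw [div_eq_mul_inv, mul_comm] at hm ⊢; exact hm
      have h2 : (2:ℝ) ^ (-((m:ℝ)+1)) ≤ (2:ℝ) ^ (-(m:ℝ)) :=
        Real.rpow_le_rpow_of_exponent_le one_le_two (by linarith)
      calc r * (2:ℝ) ^ (-((m:ℝ)+1)) ≤ r * (2:ℝ) ^ (-(m:ℝ)) := by
            exact mul_le_mul_of_nonneg_left h2 hr.le
        _ = r * (1/2:ℝ)^m := by rw [hpow]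
        _ ≤ ‖y‖ := h1.le
    set k := Nat.find hex with hk
    have hk1 : r * (2:ℝ) ^ (-((k:ℝ)+1)) ≤ ‖y‖ := Nat.find_spec hex
    have hk2 : ‖y‖ < r * (2:ℝ) ^ (-(k:ℝ)) := by
      rcases Nat.eq_zero_or_pos k with hk0 | hk0
      · rw [hk0]; simpa using hyr
      · have hmin := Nat.find_min hex (m := k - 1) (by omega)
        push_neg at hmin
        have hcast : (((k-1:ℕ):ℝ)+1) = (k:ℝ) := by
          rw [Nat.cast_sub hk0]; ring
        rw [show -(k:ℝ) = -(((k-1:ℕ):ℝ)+1) from by rw [hcast]]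
        exact hmin
    refine ⟨k, ?_, ?_⟩
    · simpa [mem_ball, dist_eq_norm] using hk2
    · simp only [mem_ball, dist_eq_norm, sub_zero, not_lt]
      exact hk1
  -- measure of the origin
  haveI : Nonempty (Fin n) := ⟨⟨0, hn⟩⟩
  haveI : Nontrivial (Euc n) := inferInstance
  have h0 : (volume : Measure (Euc n)) {(0:Euc n)} = 0 := measure_singleton 0
  -- per-annulus estimate
  have hann : ∀ k : ℕ,
      (∫⁻ y in A k, ENNReal.ofReal (f y ^ p * w y)) ≤
        ENNReal.ofReal ((2:ℝ)^(|α|+α) * r^(lam-α) * q^k) * M ^ p := by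
    intro k
    set a : ℝ := r * (2:ℝ) ^ (-((k:ℝ)+1)) with ha
    have ha0 : 0 < a := mul_pos hr (Real.rpow_pos_of_pos two_pos _)
    have h2a : r * (2:ℝ) ^ (-(k:ℝ)) = 2 * a := by
      rw [ha, show (-(k:ℝ)) = 1 + (-((k:ℝ)+1)) by ring, Real.rpow_add two_pos, Real.rpow_one]
      ring
    have hsub2 : A k ⊆ ball (0:Euc n) (2*a) := by
      rw [← h2a]; exact fun y hy => hy.1
    have hmeas : MeasurableSet (A k) := measurableSet_ball.diff measurableSet_ball
    have hw1 : ∀ x, 0 ≤ w x :=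
      ((show (∀ x, 0 ≤ w x) ∧ LocallyIntegrable w volume from hw)).1
    have hpt : ∀ y ∈ A k, ENNReal.ofReal (f y ^ p * w y) ≤
        ENNReal.ofReal ((2:ℝ)^|α| * a^(-α)) * ENNReal.ofReal (f y ^ p * u y) := by
      intro y hy
      have hya : a ≤ ‖y‖ := by
        have h5 := hy.2
        simp only [mem_ball, dist_zero_right, not_lt] at h5
        rw [ha]; exact h5
      have hy2a : ‖y‖ ≤ 2*a := by
        have h5 := hy.1
        rw [← h2a]
        have := mem_ball_zero_iff.1 h5
        exact this.le
      have hs0 : 0 < ‖y‖ := lt_of_lt_of_le ha0 hya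
      have key : a ^ α ≤ (2:ℝ)^|α| * ‖y‖ ^ α := by
        rcases le_or_gt 0 α with h | h
        · rw [abs_of_nonneg h]
          calc a ^ α ≤ ‖y‖ ^ α := Real.rpow_le_rpow ha0.le hya h
            _ ≤ 2^α * ‖y‖^α := by
                nlinarith [Real.one_le_rpow one_le_two h, Real.rpow_nonneg (norm_nonneg y) α]
        · rw [abs_of_neg h]
          have h1 : (2*a) ^ α ≤ ‖y‖ ^ α := Real.rpow_le_rpow_of_nonpos hs0 hy2a h.le
          have h2 : (2*a)^α = 2^α * a^α := Real.mul_rpow (by norm_num) ha0.le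
          have h3 : (2:ℝ)^(-α) * 2^α = 1 := by
            rw [← Real.rpow_add two_pos]; simp
          nlinarith [Real.rpow_pos_of_pos two_pos (-α), Real.rpow_pos_of_pos two_pos α,
            Real.rpow_pos_of_pos ha0 α]
      have haα : 0 < a ^ α := Real.rpow_pos_of_pos ha0 α
      have hone : (1:ℝ) ≤ (2:ℝ)^|α| * a^(-α) * ‖y‖^α := by
        rw [Real.rpow_neg ha0.le,
          show (2:ℝ)^|α| * (a^α)⁻¹ * ‖y‖^α = ((2:ℝ)^|α| * ‖y‖^α) / a^α by ring]
        exact (one_le_div haα).2 key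
      have h4 : 0 ≤ f y ^ p * w y := mul_nonneg (Real.rpow_nonneg (hf0 y) p) (hw1 y)
      have hreal : f y ^ p * w y ≤ ((2:ℝ)^|α| * a^(-α)) * (f y ^ p * (‖y‖^α * w y)) := by
        calc f y ^ p * w y = 1 * (f y ^ p * w y) := (one_mul _).symm
          _ ≤ ((2:ℝ)^|α| * a^(-α) * ‖y‖^α) * (f y ^ p * w y) :=
              mul_le_mul_of_nonneg_right hone h4
          _ = ((2:ℝ)^|α| * a^(-α)) * (f y ^ p * (‖y‖^α * w y)) := by ring
      have h6 : u y = ‖y‖^α * w y := rfl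
      rw [h6, ← ENNReal.ofReal_mul (by positivity)]
      exact ENNReal.ofReal_le_ofReal hreal
    have hqk : q^k = (2:ℝ)^((α-lam)*(k:ℝ)) := by
      rw [hqdef, ← Real.rpow_natCast ((2:ℝ)^(α-lam)) k, ← Real.rpow_mul (by norm_num)]
    have hmr : ∀ e z : ℝ, (r * (2:ℝ)^e)^z = r^z * ((2:ℝ)^e)^z :=
      fun e z => Real.mul_rpow hr.le (Real.rpow_nonneg (by norm_num) e)
    have hcomp : (2:ℝ)^|α| * a^(-α) * (2*a)^lam = (2:ℝ)^(|α|+α) * r^(lam-α) * q^k := by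
      rw [← h2a, ha]
      simp only [hmr, ← Real.rpow_mul (show (0:ℝ) ≤ 2 by norm_num), hqk]
      simp only [Real.rpow_def_of_pos two_pos, Real.rpow_def_of_pos hr, ← Real.exp_add]
      rw [Real.exp_eq_exp]
      ring
    calc (∫⁻ y in A k, ENNReal.ofReal (f y ^ p * w y))
        ≤ ∫⁻ y in A k, ENNReal.ofReal ((2:ℝ)^|α| * a^(-α)) * ENNReal.ofReal (f y ^ p * u y) :=
          setLIntegral_mono' hmeas hpt
      _ = ENNReal.ofReal ((2:ℝ)^|α| * a^(-α)) * ∫⁻ y in A k, ENNReal.ofReal (f y ^ p * u y) :=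
          lintegral_const_mul' _ _ ENNReal.ofReal_ne_top
      _ ≤ ENNReal.ofReal ((2:ℝ)^|α| * a^(-α)) *
            ∫⁻ y in ball (0:Euc n) (2*a), ENNReal.ofReal (f y ^ p * u y) :=
          mul_le_mul_right (lintegral_mono_set hsub2) _
      _ ≤ ENNReal.ofReal ((2:ℝ)^|α| * a^(-α)) * (ENNReal.ofReal ((2*a) ^ lam) * M ^ p) :=
          mul_le_mul_right (hball (2*a) (by positivity)) _
      _ = ENNReal.ofReal ((2:ℝ)^|α| * a^(-α) * (2*a)^lam) * M ^ p := by
          rw [← mul_assoc, ← ENNReal.ofReal_mul (by positivity)]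
      _ = ENNReal.ofReal ((2:ℝ)^(|α|+α) * r^(lam-α) * q^k) * M ^ p := by rw [hcomp]
  -- assemble
  have hI : (∫⁻ y in ball (0:Euc n) r, ENNReal.ofReal (f y ^ p * w y)) ≤
      C0 * ENNReal.ofReal (r^(lam-α)) * M ^ p := by
    calc (∫⁻ y in ball (0:Euc n) r, ENNReal.ofReal (f y ^ p * w y))
        ≤ ∫⁻ y in ({0} ∪ ⋃ k, A k : Set (Euc n)), ENNReal.ofReal (f y ^ p * w y) :=
          lintegral_mono_set hcov
      _ ≤ (∫⁻ y in ({0} : Set (Euc n)), ENNReal.ofReal (f y ^ p * w y)) +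
            ∫⁻ y in ⋃ k, A k, ENNReal.ofReal (f y ^ p * w y) := lintegral_union_le _ _ _
      _ ≤ 0 + ∑' k, ∫⁻ y in A k, ENNReal.ofReal (f y ^ p * w y) := by
          refine add_le_add (le_of_eq ?_) (lintegral_iUnion_le _ _)
          exact setLIntegral_measure_zero _ _ h0
      _ = ∑' k, ∫⁻ y in A k, ENNReal.ofReal (f y ^ p * w y) := zero_add _
      _ ≤ ∑' k, ENNReal.ofReal ((2:ℝ)^(|α|+α) * r^(lam-α) * q^k) * M ^ p :=
          ENNReal.tsum_le_tsum hann
      _ = (∑' k, ENNReal.ofReal ((2:ℝ)^(|α|+α) * r^(lam-α)) * (ENNReal.ofReal q)^k) * M ^ p := by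
          rw [ENNReal.tsum_mul_right]
          congr 1
          refine tsum_congr fun k => ?_
          rw [ENNReal.ofReal_mul (by positivity), ENNReal.ofReal_pow hq0.le]
      _ = ENNReal.ofReal ((2:ℝ)^(|α|+α) * r^(lam-α)) * (1 - ENNReal.ofReal q)⁻¹ * M ^ p := by
          rw [ENNReal.tsum_mul_left, ENNReal.tsum_geometric]
      _ = C0 * ENNReal.ofReal (r^(lam-α)) * M ^ p := by
          rw [hC0, ENNReal.ofReal_mul (by positivity)]
          ring
  have hfin := ENNReal.rpow_le_rpow hI (by positivity : (0:ℝ) ≤ 1/p)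
  rw [ENNReal.mul_rpow_of_nonneg _ _ (by positivity : (0:ℝ) ≤ 1/p),
    ENNReal.mul_rpow_of_nonneg _ _ (by positivity : (0:ℝ) ≤ 1/p),
    ← ENNReal.rpow_mul M, mul_one_div_cancel hp0.ne', ENNReal.rpow_one,
    ENNReal.ofReal_rpow_of_pos (Real.rpow_pos_of_pos hr _),
    ← Real.rpow_mul hr.le, mul_one_div] at hfin
  exact hfin
end

section
/- Let n ≥ 1, 1 ≤ p < ∞, 0 ≤ λ < n and 0 ≤ α < λ. If w is a weight on ℝⁿ with w ∈ A_p, then the weight x ↦ |x|^α w(x) belongs to A_{p + λ/n}. -/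
open MeasureTheory Metric ENNReal NNReal Topology Filter

/-!
Write `q = p + δ` with `δ = λ/n`, `v = |x|^α w` and `β = α/δ < n`. On a ball `B = B(x₀, r)` one has
`v ≤ (|x₀| + r)^α w`, and the dual weight `v^{-1/(q-1)} = w^{-1/(q-1)} |x|^{-α/(q-1)}` is split by
Hölder's inequality with exponents `(q-1)/(p-1)` and `(q-1)/δ` (for `p = 1`, by the pointwise
`A_1` bound on `w⁻¹` instead). What remains besides the `A_p` constant of `w` is
`((|x₀| + r)^β ⨍_B |x|^{-β})^δ`, which is bounded uniformly in `B`: far from the origin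
`|x| ≈ |x₀| + r` on `B`, while a ball near the origin lies in `B(0, 3r)`, on which scaling reduces
the integral to the local integrability of `|x|^{-β}`.
-/

section PowerWeight

variable {E : Type*} [NormedAddCommGroup E] [NormedSpace ℝ E] [FiniteDimensional ℝ E]
  [MeasurableSpace E] [BorelSpace E] (μ : Measure E) [μ.IsAddHaarMeasure] {β : ℝ}

lemma integrableOn_ball_norm_rpow_neg (hβ0 : 0 ≤ β) (hβ : β < Module.finrank ℝ E)
    (x : E) (r : ℝ) : IntegrableOn (fun y : E => ‖y‖ ^ (-β)) (ball x r) μ := by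
  have hd : 1 ≤ Module.finrank ℝ E := by exact_mod_cast hβ0.trans_lt hβ
  have hloc : LocallyIntegrable (fun y : E => ‖y‖ ^ (-β)) μ :=
    locallyIntegrable_of_norm_le_rpow (C := 1) hd hβ
      (ae_of_all _ fun y => by simp [abs_of_nonneg (Real.rpow_nonneg (norm_nonneg y) _)])
      (by fun_prop : Measurable fun y : E => ‖y‖ ^ (-β)).aestronglyMeasurable
  exact (hloc.integrableOn_isCompact (isCompact_closedBall x r)).mono_set ball_subset_closedBall

lemma setIntegral_ball_zero_norm_rpow_neg {R : ℝ} (hR : 0 < R) :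
    ∫ y in ball (0 : E) R, ‖y‖ ^ (-β) ∂μ =
      R ^ Module.finrank ℝ E * R ^ (-β) * ∫ y in ball (0 : E) 1, ‖y‖ ^ (-β) ∂μ := by
  have h := Measure.setIntegral_comp_smul μ (fun y : E => ‖y‖ ^ (-β)) (ball 0 1) hR.ne'
  simp only [norm_smul, Real.norm_eq_abs, abs_of_pos hR, Real.mul_rpow hR.le (norm_nonneg _),
    integral_const_mul, smul_unitBall_of_pos hR, abs_of_pos (inv_pos.2 (pow_pos hR _)),
    smul_eq_mul] at h
  rw [mul_assoc, h, ← mul_assoc, mul_inv_cancel₀ (pow_pos hR _).ne', one_mul]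

lemma addHaar_real_ball_of_pos (x : E) {r : ℝ} (hr : 0 < r) :
    μ.real (ball x r) = r ^ Module.finrank ℝ E * μ.real (ball (0 : E) 1) := by
  rw [measureReal_def, Measure.addHaar_ball_of_pos μ x hr, ENNReal.toReal_mul,
    ENNReal.toReal_ofReal (by positivity), measureReal_def]

theorem exists_rpow_mul_setIntegral_norm_rpow_neg_le (hβ0 : 0 ≤ β)
    (hβ : β < Module.finrank ℝ E) :
    ∃ C : ℝ, ∀ (x : E) (r : ℝ), 0 < r →
      (‖x‖ + r) ^ β * ∫ y in ball x r, ‖y‖ ^ (-β) ∂μ ≤ C * μ.real (ball x r) := by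
  set d := Module.finrank ℝ E
  set I := ∫ y in ball (0 : E) 1, ‖y‖ ^ (-β) ∂μ
  set V := μ.real (ball (0 : E) 1)
  have hV : 0 < V := ENNReal.toReal_pos (measure_ball_pos μ 0 one_pos).ne' measure_ball_lt_top.ne
  have hI : 0 ≤ I := setIntegral_nonneg measurableSet_ball fun y _ => by positivity
  refine ⟨3 ^ d * I / V + 3 ^ β, fun x r hr => ?_⟩
  rcases le_or_gt ‖x‖ (2 * r) with hnear | hfar
  · have hint : 0 ≤ ∫ y in ball x r, ‖y‖ ^ (-β) ∂μ :=
      setIntegral_nonneg measurableSet_ball fun y _ => by positivity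
    have hsub : ball x r ⊆ ball (0 : E) (3 * r) := by
      intro y hy
      rw [mem_ball_zero_iff]
      rw [mem_ball_iff_norm] at hy
      linarith [norm_sub_norm_le y x]
    calc (‖x‖ + r) ^ β * ∫ y in ball x r, ‖y‖ ^ (-β) ∂μ
        ≤ (3 * r) ^ β * ∫ y in ball (0 : E) (3 * r), ‖y‖ ^ (-β) ∂μ := by
          refine mul_le_mul (by gcongr; linarith) ?_ hint (by positivity)
          exact setIntegral_mono_set (integrableOn_ball_norm_rpow_neg μ hβ0 hβ 0 _)
            (ae_of_all _ fun y => by positivity) hsub.eventuallyLE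
      _ = 3 ^ d * I / V * μ.real (ball x r) := by
          rw [setIntegral_ball_zero_norm_rpow_neg μ (by positivity),
            addHaar_real_ball_of_pos μ x hr, Real.rpow_neg (by positivity), mul_pow]
          field_simp
          ring
      _ ≤ (3 ^ d * I / V + 3 ^ β) * μ.real (ball x r) := by
          gcongr
          exact le_add_of_nonneg_right (by positivity)
  · set b := (‖x‖ + r) / 3 with hb_def
    have hb : 0 < b := by positivity
    have hlow : ∀ y ∈ ball x r, b ≤ ‖y‖ := by
      intro y hy
      rw [mem_ball_iff_norm'] at hy
      linarith [norm_sub_norm_le x y, hb_def]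
    calc (‖x‖ + r) ^ β * ∫ y in ball x r, ‖y‖ ^ (-β) ∂μ
        ≤ (3 * b) ^ β * ∫ _ in ball x r, b ^ (-β) ∂μ := by
          rw [show ‖x‖ + r = 3 * b by ring]
          refine mul_le_mul_of_nonneg_left ?_ (by positivity)
          refine setIntegral_mono_on (integrableOn_ball_norm_rpow_neg μ hβ0 hβ x r)
            (integrableOn_const measure_ball_lt_top.ne) measurableSet_ball fun y hy => ?_
          exact Real.rpow_le_rpow_of_nonpos hb (hlow y hy) (by linarith)
      _ = 3 ^ β * μ.real (ball x r) := by
          rw [setIntegral_const, smul_eq_mul, Real.mul_rpow (by norm_num) hb.le,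
            Real.rpow_neg hb.le]
          field_simp
      _ ≤ (3 ^ d * I / V + 3 ^ β) * μ.real (ball x r) := by
          gcongr
          exact le_add_of_nonneg_left (by positivity)

theorem exists_rpow_mul_setLAverage_norm_rpow_neg_le (hβ0 : 0 ≤ β)
    (hβ : β < Module.finrank ℝ E) :
    ∃ C : ℝ≥0∞, C ≠ ⊤ ∧ ∀ (x : E) (r : ℝ), 0 < r →
      ENNReal.ofReal ((‖x‖ + r) ^ β) * ⨍⁻ y in ball x r, ENNReal.ofReal (‖y‖ ^ (-β)) ∂μ ≤ C := by
  obtain ⟨C, hC⟩ := exists_rpow_mul_setIntegral_norm_rpow_neg_le μ hβ0 hβ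
  refine ⟨ENNReal.ofReal C, ENNReal.ofReal_ne_top, fun x r hr => ?_⟩
  have hV : 0 < μ.real (ball x r) :=
    ENNReal.toReal_pos (measure_ball_pos μ x hr).ne' measure_ball_lt_top.ne
  rw [setLAverage_eq, ← ofReal_integral_eq_lintegral_ofReal
      (integrableOn_ball_norm_rpow_neg μ hβ0 hβ x r) (ae_of_all _ fun y => by positivity),
    ← ofReal_measureReal measure_ball_lt_top.ne, ← ENNReal.ofReal_div_of_pos hV,
    ← ENNReal.ofReal_mul (by positivity), ← mul_div_assoc]
  exact ENNReal.ofReal_le_ofReal ((div_le_iff₀ hV).2 (hC x r hr))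

end PowerWeight

section DualWeight

variable {X : Type*} [MeasurableSpace X] (ν : Measure X)

theorem lintegral_mul_rpow_add_le {f g : X → ℝ≥0∞} (hf : AEMeasurable f ν)
    (hg : AEMeasurable g ν) {a b : ℝ} (ha : 0 < a) (hb : 0 < b) :
    (∫⁻ x, f x * g x ∂ν) ^ (a + b) ≤
      (∫⁻ x, f x ^ ((a + b) / a) ∂ν) ^ a * (∫⁻ x, g x ^ ((a + b) / b) ∂ν) ^ b := by
  have hconj : ((a + b) / a).HolderConjugate ((a + b) / b) := by
    rw [Real.holderConjugate_iff, inv_div, inv_div, ← add_div, div_self (by positivity)]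
    exact ⟨(one_lt_div ha).2 (by linarith), rfl⟩
  calc (∫⁻ x, f x * g x ∂ν) ^ (a + b)
      ≤ ((∫⁻ x, f x ^ ((a + b) / a) ∂ν) ^ (1 / ((a + b) / a)) *
          (∫⁻ x, g x ^ ((a + b) / b) ∂ν) ^ (1 / ((a + b) / b))) ^ (a + b) :=
        ENNReal.rpow_le_rpow (ENNReal.lintegral_mul_le_Lp_mul_Lq ν hconj hf hg) (by positivity)
    _ = _ := by
        rw [ENNReal.mul_rpow_of_nonneg _ _ (by positivity), ← ENNReal.rpow_mul, ← ENNReal.rpow_mul]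
        congr 2 <;> field_simp

variable {u w : X → ℝ}

theorem lintegral_ofReal_mul_rpow_neg_inv_le (hu : ∀ x, 0 ≤ u x) (hw : ∀ x, 0 ≤ w x)
    (hum : AEMeasurable u ν) (hwm : AEMeasurable w ν) {a b : ℝ} (ha : 0 < a) (hb : 0 < b) :
    (∫⁻ x, ENNReal.ofReal ((u x * w x) ^ (-(a + b)⁻¹)) ∂ν) ^ (a + b) ≤
      (∫⁻ x, ENNReal.ofReal (w x ^ (-a⁻¹)) ∂ν) ^ a *
        (∫⁻ x, ENNReal.ofReal (u x ^ (-b⁻¹)) ∂ν) ^ b := by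
  have hpow : ∀ {t c : ℝ}, 0 ≤ t → 0 < c →
      ENNReal.ofReal (t ^ (-(a + b)⁻¹)) ^ ((a + b) / c) = ENNReal.ofReal (t ^ (-c⁻¹)) := by
    intro t c ht hc
    rw [ENNReal.ofReal_rpow_of_nonneg (by positivity) (by positivity), ← Real.rpow_mul ht]
    congr 2
    field_simp
  calc (∫⁻ x, ENNReal.ofReal ((u x * w x) ^ (-(a + b)⁻¹)) ∂ν) ^ (a + b)
      = (∫⁻ x, ENNReal.ofReal (w x ^ (-(a + b)⁻¹)) * ENNReal.ofReal (u x ^ (-(a + b)⁻¹)) ∂ν)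
          ^ (a + b) := by
        congr 1
        refine lintegral_congr fun x => ?_
        rw [Real.mul_rpow (hu x) (hw x), mul_comm, ENNReal.ofReal_mul (Real.rpow_nonneg (hw x) _)]
    _ ≤ _ := lintegral_mul_rpow_add_le ν (hwm.pow_const _).ennreal_ofReal
          (hum.pow_const _).ennreal_ofReal ha hb
    _ = _ := by
        rw [lintegral_congr fun x => hpow (hw x) ha, lintegral_congr fun x => hpow (hu x) hb]

theorem rpow_mul_ofReal_rpow_neg_le {m c : ℝ≥0∞} {s t : ℝ} (hs : 0 ≤ s) (ht : 0 < t)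
    (h : m ≤ c * ENNReal.ofReal s) : m ^ t * ENNReal.ofReal (s ^ (-t)) ≤ c ^ t := by
  -- the case `s = 0` holds only because the real power `0 ^ (-t)` is `0`
  rcases hs.eq_or_lt with rfl | hs
  · simp [Real.zero_rpow (neg_ne_zero.2 ht.ne')]
  calc m ^ t * ENNReal.ofReal (s ^ (-t))
      ≤ (c * ENNReal.ofReal s) ^ t * ENNReal.ofReal (s ^ (-t)) := by gcongr
    _ = c ^ t * (ENNReal.ofReal (s ^ t) * ENNReal.ofReal (s ^ (-t))) := by
        rw [ENNReal.mul_rpow_of_nonneg _ _ ht.le, ENNReal.ofReal_rpow_of_nonneg hs.le ht.le,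
          mul_assoc]
    _ = c ^ t := by
        rw [← ENNReal.ofReal_mul (by positivity), ← Real.rpow_add hs, add_neg_cancel,
          Real.rpow_zero, ENNReal.ofReal_one, mul_one]

theorem mul_lintegral_ofReal_mul_rpow_neg_inv_le (hu : ∀ x, 0 ≤ u x) (hw : ∀ x, 0 ≤ w x)
    (hum : AEMeasurable u ν) {b : ℝ} (hb : 0 < b) {m c : ℝ≥0∞}
    (h : ∀ᵐ x ∂ν, m ≤ c * ENNReal.ofReal (w x)) :
    m * (∫⁻ x, ENNReal.ofReal ((u x * w x) ^ (-b⁻¹)) ∂ν) ^ b ≤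
      c * (∫⁻ x, ENNReal.ofReal (u x ^ (-b⁻¹)) ∂ν) ^ b := by
  have hpt : ∀ᵐ x ∂ν, m ^ b⁻¹ * ENNReal.ofReal ((u x * w x) ^ (-b⁻¹)) ≤
      c ^ b⁻¹ * ENNReal.ofReal (u x ^ (-b⁻¹)) := by
    filter_upwards [h] with x hx
    rw [Real.mul_rpow (hu x) (hw x), ENNReal.ofReal_mul (Real.rpow_nonneg (hu x) _),
      mul_left_comm, mul_comm (c ^ b⁻¹)]
    gcongr
    exact rpow_mul_ofReal_rpow_neg_le (hw x) (inv_pos.2 hb) hx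
  have hint : m ^ b⁻¹ * ∫⁻ x, ENNReal.ofReal ((u x * w x) ^ (-b⁻¹)) ∂ν ≤
      c ^ b⁻¹ * ∫⁻ x, ENNReal.ofReal (u x ^ (-b⁻¹)) ∂ν :=
    calc _ ≤ ∫⁻ x, m ^ b⁻¹ * ENNReal.ofReal ((u x * w x) ^ (-b⁻¹)) ∂ν :=
          lintegral_const_mul_le _ _
      _ ≤ ∫⁻ x, c ^ b⁻¹ * ENNReal.ofReal (u x ^ (-b⁻¹)) ∂ν := lintegral_mono_ae hpt
      _ = _ := lintegral_const_mul'' _ (hum.pow_const _).ennreal_ofReal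
  have hroot : ∀ k I : ℝ≥0∞, k * I ^ b = (k ^ b⁻¹ * I) ^ b := fun k I => by
    rw [ENNReal.mul_rpow_of_nonneg _ _ hb.le, ← ENNReal.rpow_mul, inv_mul_cancel₀ hb.ne',
      ENNReal.rpow_one]
  rw [hroot, hroot]
  gcongr

end DualWeight

section Muckenhoupt

variable {n : ℕ} {w : Euc n → ℝ}

theorem apConst_le_iff {q : ℝ} (hq : q ≠ 1) {K : ℝ≥0∞} :
    ApConst n q w ≤ K ↔ ∀ (x : Euc n) (r : ℝ), 0 < r →
      (⨍⁻ y in ball x r, ENNReal.ofReal (w y) ∂volume) *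
        (⨍⁻ y in ball x r, ENNReal.ofReal (w y ^ (-(q - 1)⁻¹)) ∂volume) ^ (q - 1) ≤ K := by
  have he : 1 - q / (q - 1) = -(q - 1)⁻¹ := by
    field_simp [sub_ne_zero.2 hq]
    ring
  simp only [ApConst, wInt, iSup_le_iff, setLAverage_eq, he]

theorem MemAp.exists_ae_setLAverage_le_of_one (h : MemAp n 1 w) :
    ∃ c : ℝ≥0∞, c ≠ ⊤ ∧ ∀ (x : Euc n) (r : ℝ), 0 < r → ∀ᵐ y ∂volume.restrict (ball x r),
      ⨍⁻ z in ball x r, ENNReal.ofReal (w z) ∂volume ≤ c * ENNReal.ofReal (w y) := by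
  rw [MemAp, muckConst, if_pos rfl, A1Const, sInf_lt_iff] at h
  obtain ⟨c, hc, hc_lt⟩ := h
  exact ⟨c, hc_lt.ne, fun x r hr => by simpa only [wInt, ← setLAverage_eq] using hc x r hr⟩

theorem apConst_rpow_norm_mul_lt_top (hw : ∀ x, 0 ≤ w x) {α δ q : ℝ} (hα : 0 ≤ α)
    (hδ : 0 < δ) (hαδ : α < n * δ) (hq : 1 < q) {K : ℝ≥0∞} (hK : K ≠ ⊤)
    (hdual : ∀ (x : Euc n) (r : ℝ), 0 < r →
      (⨍⁻ y in ball x r, ENNReal.ofReal (w y) ∂volume) *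
          (⨍⁻ y in ball x r, ENNReal.ofReal ((‖y‖ ^ α * w y) ^ (-(q - 1)⁻¹)) ∂volume) ^ (q - 1) ≤
        K * (⨍⁻ y in ball x r, ENNReal.ofReal ((‖y‖ ^ α) ^ (-δ⁻¹)) ∂volume) ^ δ) :
    ApConst n q (fun x => ‖x‖ ^ α * w x) < ⊤ := by
  obtain ⟨C, hC, hCbound⟩ := exists_rpow_mul_setLAverage_norm_rpow_neg_le
    (volume : Measure (Euc n)) (β := α / δ) (by positivity)
    (by rwa [finrank_euclideanSpace_fin, div_lt_iff₀ hδ])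
  refine lt_of_le_of_lt ((apConst_le_iff hq.ne').2 fun x r hr => ?_)
    (mul_lt_top hK.lt_top (rpow_lt_top_of_nonneg hδ.le hC))
  beta_reduce
  set A := ENNReal.ofReal ((‖x‖ + r) ^ α)
  have hv : ⨍⁻ y in ball x r, ENNReal.ofReal (‖y‖ ^ α * w y) ∂volume ≤
      A * ⨍⁻ y in ball x r, ENNReal.ofReal (w y) ∂volume := by
    rw [setLAverage_eq, setLAverage_eq, ← mul_div_assoc,
      ← lintegral_const_mul' _ _ ENNReal.ofReal_ne_top]
    gcongr ?_ / _
    refine setLIntegral_mono' measurableSet_ball fun y hy => ?_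
    rw [← ENNReal.ofReal_mul (by positivity)]
    have hy : ‖y‖ ≤ ‖x‖ + r := by
      rw [mem_ball_iff_norm] at hy
      linarith [norm_sub_norm_le y x]
    gcongr
    exact hw y
  have hA : A = ENNReal.ofReal ((‖x‖ + r) ^ (α / δ)) ^ δ := by
    rw [ENNReal.ofReal_rpow_of_nonneg (by positivity) hδ.le, ← Real.rpow_mul (by positivity),
      div_mul_cancel₀ _ hδ.ne']
  have hexp : ∀ y : Euc n, (‖y‖ ^ α) ^ (-δ⁻¹) = ‖y‖ ^ (-(α / δ)) := fun y => by
    rw [← Real.rpow_mul (norm_nonneg y)]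
    ring_nf
  simp only [hexp] at hdual
  calc (⨍⁻ y in ball x r, ENNReal.ofReal (‖y‖ ^ α * w y) ∂volume) *
        (⨍⁻ y in ball x r, ENNReal.ofReal ((‖y‖ ^ α * w y) ^ (-(q - 1)⁻¹)) ∂volume) ^ (q - 1)
      ≤ A * ((⨍⁻ y in ball x r, ENNReal.ofReal (w y) ∂volume) *
        (⨍⁻ y in ball x r, ENNReal.ofReal ((‖y‖ ^ α * w y) ^ (-(q - 1)⁻¹)) ∂volume) ^ (q - 1)) := by
        rw [← mul_assoc]
        gcongr
    _ ≤ A * (K * (⨍⁻ y in ball x r, ENNReal.ofReal (‖y‖ ^ (-(α / δ))) ∂volume) ^ δ) := by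
        gcongr A * ?_
        exact hdual x r hr
    _ = K * (ENNReal.ofReal ((‖x‖ + r) ^ (α / δ)) *
          ⨍⁻ y in ball x r, ENNReal.ofReal (‖y‖ ^ (-(α / δ))) ∂volume) ^ δ := by
        rw [hA, ENNReal.mul_rpow_of_nonneg _ _ hδ.le]
        ring
    _ ≤ K * C ^ δ := by
        gcongr
        exact hCbound x r hr

theorem memAp_rpow_norm_mul_of_memAp_one (hw : ∀ x, 0 ≤ w x) {α δ : ℝ} (hα : 0 ≤ α)
    (hδ : 0 < δ) (hαδ : α < n * δ) (h : MemAp n 1 w) :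
    MemAp n (1 + δ) (fun x => ‖x‖ ^ α * w x) := by
  obtain ⟨c, hc, hcw⟩ := h.exists_ae_setLAverage_le_of_one
  have hq : 1 < 1 + δ := by linarith
  rw [MemAp, muckConst, if_neg hq.ne']
  refine apConst_rpow_norm_mul_lt_top hw hα hδ hαδ hq hc fun x r hr => ?_
  rw [add_sub_cancel_left]
  exact mul_lintegral_ofReal_mul_rpow_neg_inv_le _ (fun y => by positivity) hw (by fun_prop) hδ
    (Measure.ae_smul_measure (hcw x r hr) _)

theorem memAp_rpow_norm_mul_of_one_lt (hw : ∀ x, 0 ≤ w x) (hwm : AEMeasurable w) {p α δ : ℝ}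
    (hp : 1 < p) (hα : 0 ≤ α) (hδ : 0 < δ) (hαδ : α < n * δ) (h : MemAp n p w) :
    MemAp n (p + δ) (fun x => ‖x‖ ^ α * w x) := by
  have hq : 1 < p + δ := by linarith
  rw [MemAp, muckConst, if_neg hp.ne'] at h
  rw [MemAp, muckConst, if_neg hq.ne']
  refine apConst_rpow_norm_mul_lt_top hw hα hδ hαδ hq h.ne fun x r hr => ?_
  rw [show p + δ - 1 = (p - 1) + δ by ring]
  calc _ ≤ (⨍⁻ y in ball x r, ENNReal.ofReal (w y) ∂volume) *
        ((⨍⁻ y in ball x r, ENNReal.ofReal (w y ^ (-(p - 1)⁻¹)) ∂volume) ^ (p - 1) *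
          (⨍⁻ y in ball x r, ENNReal.ofReal ((‖y‖ ^ α) ^ (-δ⁻¹)) ∂volume) ^ δ) := by
        gcongr _ * ?_
        exact lintegral_ofReal_mul_rpow_neg_inv_le _ (fun y => by positivity) hw (by fun_prop)
          (hwm.restrict.smul_measure _) (sub_pos.2 hp) hδ
    _ ≤ ApConst n p w * (⨍⁻ y in ball x r, ENNReal.ofReal ((‖y‖ ^ α) ^ (-δ⁻¹)) ∂volume) ^ δ := by
        rw [← mul_assoc]
        gcongr
        exact (apConst_le_iff hp.ne').1 le_rfl x r hr

end Muckenhoupt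

theorem statement11_general (n : ℕ) (p lam α : ℝ) (hp : 1 ≤ p)
    (hlam : lam < (n : ℝ)) (hα0 : 0 ≤ α) (hα : α < lam)
    (w : Euc n → ℝ) (hw : IsWeight n w) (hwAp : MemAp n p w) :
    MemAp n (p + lam / n) (fun x => ‖x‖ ^ α * w x) := by
  have hn : (0 : ℝ) < n := by linarith
  have hδ : 0 < lam / n := div_pos (by linarith) hn
  have hαδ : α < n * (lam / n) := by rwa [mul_div_cancel₀ _ hn.ne']
  rcases hp.eq_or_lt with rfl | hp
  · exact memAp_rpow_norm_mul_of_memAp_one hw.1 hα0 hδ hαδ hwAp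
  · exact memAp_rpow_norm_mul_of_one_lt hw.1 hw.2.aestronglyMeasurable.aemeasurable hp hα0 hδ
      hαδ hwAp

/-- if `w ∈ A_p` and `0 ≤ α < λ < n`, then `|x|^α w ∈ A_{p + λ/n}`. -/
theorem statement11 (n : ℕ) (hn : 1 ≤ n) (p lam α : ℝ) (hp : 1 ≤ p)
    (hlam0 : 0 ≤ lam) (hlam : lam < (n : ℝ)) (hα0 : 0 ≤ α) (hα : α < lam)
    (w : Euc n → ℝ) (hw : IsWeight n w) (hwAp : MemAp n p w) :
    MemAp n (p + lam / n) (fun x => ‖x‖ ^ α * w x) :=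
  statement11_general n p lam α hp hlam hα0 hα w hw hwAp
end

section
/- Let n ≥ 1, 1 ≤ p < ∞, 0 ≤ λ < n, and let w be a weight on ℝⁿ. If there is a constant C such that ‖Mf‖_{WL^{p,λ}(w)} ≤ C ‖f‖_{L^{p,λ}(w)} for every f with ‖f‖_{L^{p,λ}(w)} < ∞ (i.e., M is bounded from L^{p,λ}(w) to WL^{p,λ}(w)), then w ∈ A_{p + λ/n}. -/
open MeasureTheory Metric ENNReal NNReal Topology Filter

/-!
Testing the weak-type bound on a function `f` and a ball `B = B(x, r)`: since `Mf ≥ ⨍_B |f|` on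
`B`, it gives `(⨍_B |f|)^p r^{-λ} w(B) ≤ C^p ‖f‖^p_{L^{p,λ}(w)}`.

For `q = p + λ/n > 1` take `f = min(σ, k) 1_B` with `σ = w^{1-q'}`. As `(1 - q') (p - θ) = -1`
for `θ = 1 - λ/n`, one has `|f|^p w ≤ f^θ`, and Hölder on each ball `B'` bounds
`r'^{-λ} ∫_{B'} f^θ` by `|B(0,1)|^{λ/n} (∫_B f)^θ`. The exponents then recombine, using
`|B| = |B(0,1)| r^n`, into `(w(B)/|B|) (∫_B min(σ, k) / |B|)^{q-1} ≤ C^p`; let `k → ∞`.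

For `q = 1`, i.e. `p = 1` and `λ = 0`, take `f = 1_E` with `E ⊆ B`: `|E| w(B)/|B| ≤ C w(E)`,
and applied to `E = {y ∈ B : (C + 1) w(y) < w(B)/|B|}` this forces `|E| = 0`.
-/

open Set

lemma Real.rpow_mul_le_rpow_of_le_rpow {a s e p θ : ℝ} (hp : 0 < p) (he : e < 0)
    (hexp : p + e⁻¹ = θ) (ha : 0 ≤ a) (hs : 0 ≤ s) (hsa : s ≤ a ^ e) : s ^ p * a ≤ s ^ θ := by
  rcases ha.eq_or_lt with rfl | ha
  · rw [mul_zero]; exact Real.rpow_nonneg hs θ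
  rcases hs.eq_or_lt with rfl | hs
  · rw [Real.zero_rpow hp.ne', zero_mul]; exact Real.rpow_nonneg le_rfl θ
  have has : a ≤ s ^ e⁻¹ := by
    calc a = (a ^ e) ^ e⁻¹ := by
          rw [← Real.rpow_mul ha.le, mul_inv_cancel₀ he.ne, Real.rpow_one]
      _ ≤ s ^ e⁻¹ := Real.rpow_le_rpow_of_nonpos hs hsa (inv_nonpos.2 he.le)
  calc s ^ p * a ≤ s ^ p * s ^ e⁻¹ := mul_le_mul_of_nonneg_left has (by positivity)
    _ = s ^ θ := by rw [← Real.rpow_add hs, hexp]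

lemma ENNReal.ofReal_rpow_neg_mul_ofReal_rpow {r : ℝ} (hr : 0 < r) (a : ℝ) :
    ENNReal.ofReal (r ^ (-a)) * ENNReal.ofReal (r ^ a) = 1 := by
  rw [← ENNReal.ofReal_mul (by positivity), ← Real.rpow_add hr, neg_add_cancel, Real.rpow_zero,
    ENNReal.ofReal_one]

lemma lintegral_ofReal_eq_iSup_lintegral_ofReal_min {α : Type*} [MeasurableSpace α]
    {μ : Measure α} {g : α → ℝ} (hg : Measurable g) :
    ∫⁻ y, ENNReal.ofReal (g y) ∂μ = ⨆ k : ℕ, ∫⁻ y, ENNReal.ofReal (min (g y) k) ∂μ := by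
  have hpt : ∀ y, ENNReal.ofReal (g y) = ⨆ k : ℕ, ENNReal.ofReal (min (g y) k) := fun y => by
    simp only [ENNReal.ofReal_min, ENNReal.ofReal_natCast, ← inf_iSup_eq, ENNReal.iSup_natCast,
      inf_top_eq]
  rw [lintegral_congr hpt]
  refine lintegral_iSup (fun k => (hg.min measurable_const).ennreal_ofReal) fun k l hkl y => ?_
  exact ENNReal.ofReal_le_ofReal (min_le_min_left _ (Nat.cast_le.2 hkl))

lemma ae_le_mul_of_measure_mul_le_setLIntegral {α : Type*} [MeasurableSpace α] {μ : Measure α}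
    {s : Set α} (hs : MeasurableSet s) {g : α → ℝ≥0∞} (hg : Measurable g)
    (hgs : ∫⁻ y in s, g y ∂μ ≠ ⊤) {Q c : ℝ≥0∞} (hc : c ≠ ⊤)
    (h : ∀ E ⊆ s, MeasurableSet E → μ E * Q ≤ c * ∫⁻ y in E, g y ∂μ) :
    ∀ᵐ y ∂μ.restrict s, Q ≤ (c + 1) * g y := by
  set bad := s ∩ {y | (c + 1) * g y < Q}
  have hbad : MeasurableSet bad := hs.inter (measurableSet_lt (hg.const_mul _) measurable_const)
  have hbad_le : (c + 1) * ∫⁻ y in bad, g y ∂μ ≤ μ bad * Q := by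
    rw [← lintegral_const_mul _ hg, mul_comm, ← setLIntegral_const]
    exact setLIntegral_mono measurable_const fun y hy => hy.2.le
  have hI : ∫⁻ y in bad, g y ∂μ = 0 := by
    have hItop : c * ∫⁻ y in bad, g y ∂μ ≠ ⊤ :=
      ENNReal.mul_ne_top hc (ne_top_of_le_ne_top hgs (lintegral_mono_set inter_subset_left))
    refine nonpos_iff_eq_zero.1 (ENNReal.le_of_add_le_add_left hItop ?_)
    rw [add_zero, ← add_one_mul c]
    exact hbad_le.trans (h bad inter_subset_left hbad)
  have hzero : μ bad * Q = 0 := by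
    simpa [hI] using h bad inter_subset_left hbad
  rcases mul_eq_zero.1 hzero with hμ | hQ
  · rw [ae_restrict_iff' hs]
    filter_upwards [measure_eq_zero_iff_ae_notMem.1 hμ] with y hy hys
    exact not_lt.1 fun hlt => hy ⟨hys, hlt⟩
  · exact ae_of_all _ fun y => hQ ▸ zero_le

section AeCongr

variable {n : ℕ} {w w' : Euc n → ℝ}

lemma wInt_congr_ae (h : w =ᵐ[volume] w') (s : Set (Euc n)) : wInt n w s = wInt n w' s :=
  lintegral_congr_ae (ae_restrict_of_ae (h.fun_comp ENNReal.ofReal))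

lemma morreyNorm_congr_ae (h : w =ᵐ[volume] w') (p lam : ℝ) (f : Euc n → ℝ) :
    morreyNorm n p lam w f = morreyNorm n p lam w' f := by
  have hint : ∀ s : Set (Euc n), ∫⁻ y in s, ENNReal.ofReal (|f y| ^ p * w y) =
      ∫⁻ y in s, ENNReal.ofReal (|f y| ^ p * w' y) := fun s =>
    lintegral_congr_ae (ae_restrict_of_ae (h.mono fun y hy => by simp only [hy]))
  simp only [morreyNorm, hint]

lemma weakMorreyNormE_congr_ae (h : w =ᵐ[volume] w') (p lam : ℝ) (g : Euc n → ℝ≥0∞) :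
    weakMorreyNormE n p lam w g = weakMorreyNormE n p lam w' g := by
  simp only [weakMorreyNormE, wInt_congr_ae h]

lemma memAp_congr_ae (h : w =ᵐ[volume] w') (q : ℝ) : MemAp n q w ↔ MemAp n q w' := by
  have hpow : (fun y => w y ^ (1 - q / (q - 1))) =ᵐ[volume] fun y => w' y ^ (1 - q / (q - 1)) :=
    h.fun_comp (· ^ (1 - q / (q - 1)))
  have hA1 : A1Const n w = A1Const n w' := by
    simp only [A1Const, wInt_congr_ae h]
    refine congrArg sInf (Set.ext fun c => forall₂_congr fun x r => imp_congr_right fun _ =>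
      Filter.eventually_congr ((ae_restrict_of_ae h).mono fun y hy => by simp only [hy]))
  simp only [MemAp, muckConst, ApConst, hA1, wInt_congr_ae h, wInt_congr_ae hpow]

end AeCongr

lemma IsWeight.exists_measurable_ae_eq {n : ℕ} {w : Euc n → ℝ} (hw : IsWeight n w) :
    ∃ w₀, IsWeight n w₀ ∧ Measurable w₀ ∧ w =ᵐ[volume] w₀ := by
  have hsm := hw.2.aestronglyMeasurable
  have hae : w =ᵐ[volume] fun y => max (hsm.mk w y) 0 :=
    hsm.ae_eq_mk.mono fun y hy => by simp only [← hy, max_eq_left (hw.1 y)]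
  exact ⟨_, ⟨fun y => le_max_right _ _, hw.2.congr hae⟩,
    hsm.stronglyMeasurable_mk.measurable.max measurable_const, hae⟩

lemma IsWeight.wInt_ball_ne_top {n : ℕ} {w : Euc n → ℝ} (hw : IsWeight n w) (x : Euc n) (r : ℝ) :
    wInt n w (ball x r) ≠ ⊤ :=
  ((hw.2.integrableOn_isCompact (isCompact_closedBall x r)).mono_set
    ball_subset_closedBall).lintegral_lt_top.ne

section Ball

variable {n : ℕ} {lam : ℝ}

lemma volume_ball_rpow (hlam : 0 ≤ lam) (hn : (n : ℝ) ≠ 0) (x : Euc n) {r : ℝ} (hr : 0 < r) :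
    volume (ball x r) ^ (lam / n) =
      ENNReal.ofReal (r ^ lam) * volume (ball (0 : Euc n) 1) ^ (lam / n) := by
  have hexp : 0 ≤ lam / n := div_nonneg hlam (Nat.cast_nonneg n)
  rw [Measure.addHaar_ball_of_pos volume x hr, finrank_euclideanSpace_fin,
    ENNReal.mul_rpow_of_nonneg _ _ hexp, ENNReal.ofReal_rpow_of_nonneg (by positivity) hexp,
    ← Real.rpow_natCast, ← Real.rpow_mul hr.le, mul_div_cancel₀ lam hn]

lemma inv_volume_ball_rpow_mul (hlam : 0 ≤ lam) (hn : (n : ℝ) ≠ 0) (x : Euc n) {r : ℝ}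
    (hr : 0 < r) :
    (volume (ball x r))⁻¹ ^ (1 - lam / n) * ENNReal.ofReal (r ^ (-lam)) =
      (volume (ball x r))⁻¹ * volume (ball (0 : Euc n) 1) ^ (lam / n) := by
  have hV0 : volume (ball x r) ≠ 0 := (measure_ball_pos volume x hr).ne'
  have hVtop : volume (ball x r) ≠ ⊤ := measure_ball_lt_top.ne
  rw [sub_eq_add_neg, ENNReal.rpow_add _ _ (ENNReal.inv_ne_zero.2 hVtop)
    (ENNReal.inv_ne_top.2 hV0), ENNReal.rpow_one, ENNReal.rpow_neg, ENNReal.inv_rpow, inv_inv,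
    volume_ball_rpow hlam hn x hr]
  calc _ = ENNReal.ofReal (r ^ (-lam)) * ENNReal.ofReal (r ^ lam) *
        ((volume (ball x r))⁻¹ * volume (ball (0 : Euc n) 1) ^ (lam / n)) := by ring
    _ = _ := by rw [ENNReal.ofReal_rpow_neg_mul_ofReal_rpow hr, one_mul]

lemma morreyNorm_le_of_rpow_mul_le {p : ℝ} {w f : Euc n → ℝ} (hp : 0 ≤ p) (hlam0 : 0 ≤ lam)
    (hlam : lam < n) (hf : Measurable f)
    (hpt : ∀ y, ENNReal.ofReal (|f y| ^ p * w y) ≤ ENNReal.ofReal |f y| ^ (1 - lam / n)) :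
    morreyNorm n p lam w f ≤ (volume (ball (0 : Euc n) 1) ^ (lam / n) *
      (∫⁻ y, ENNReal.ofReal |f y|) ^ (1 - lam / n)) ^ (1 / p) := by
  have hn : (0 : ℝ) < n := hlam0.trans_lt hlam
  have hlamn : 0 ≤ lam / n := div_nonneg hlam0 hn.le
  have hθ : 0 ≤ 1 - lam / n := by rw [sub_nonneg, div_le_one hn]; exact hlam.le
  refine iSup₂_le fun z r => iSup_le fun hr => ENNReal.rpow_le_rpow ?_ (one_div_nonneg.2 hp)
  have holder : ∫⁻ y in ball z r, ENNReal.ofReal |f y| ^ (1 - lam / n) ≤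
      (∫⁻ y in ball z r, ENNReal.ofReal |f y|) ^ (1 - lam / n) *
        volume (ball z r) ^ (lam / n) := by
    simpa using ENNReal.lintegral_mul_norm_pow_le (μ := volume.restrict (ball z r))
      (g := fun _ => 1) hf.abs.ennreal_ofReal.aemeasurable aemeasurable_const hθ hlamn
      (sub_add_cancel 1 _)
  calc ENNReal.ofReal (r ^ (-lam)) * ∫⁻ y in ball z r, ENNReal.ofReal (|f y| ^ p * w y)
      ≤ ENNReal.ofReal (r ^ (-lam)) * ((∫⁻ y, ENNReal.ofReal |f y|) ^ (1 - lam / n) *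
          (ENNReal.ofReal (r ^ lam) * volume (ball (0 : Euc n) 1) ^ (lam / n))) := by
        rw [← volume_ball_rpow hlam0 hn.ne' z hr]
        gcongr
        exact (lintegral_mono hpt).trans <| holder.trans <|
          mul_le_mul_left (ENNReal.rpow_le_rpow (setLIntegral_le_lintegral _ _) hθ) _
    _ = ENNReal.ofReal (r ^ (-lam)) * ENNReal.ofReal (r ^ lam) *
          (volume (ball (0 : Euc n) 1) ^ (lam / n) *
            (∫⁻ y, ENNReal.ofReal |f y|) ^ (1 - lam / n)) := by ring
    _ = _ := by rw [ENNReal.ofReal_rpow_neg_mul_ofReal_rpow hr, one_mul]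

end Ball

def MaximalWeakMorreyBounded (n : ℕ) (p lam : ℝ) (w : Euc n → ℝ) (C : ℝ≥0∞) : Prop :=
  ∀ f : Euc n → ℝ, Measurable f → morreyNorm n p lam w f < ⊤ →
    weakMorreyNormE n p lam w (maximal n f) ≤ C * morreyNorm n p lam w f

section Testing

variable {n : ℕ} {p lam : ℝ} {w : Euc n → ℝ} {C : ℝ≥0∞}

lemma average_le_maximal (f : Euc n → ℝ) {z y : Euc n} {r : ℝ} (hr : 0 < r) (hy : y ∈ ball z r) :
    (volume (ball z r))⁻¹ * ∫⁻ u in ball z r, ENNReal.ofReal |f u| ≤ maximal n f y :=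
  le_iSup_of_le z <| le_iSup_of_le r <| le_iSup_of_le hr <| le_iSup_of_le hy le_rfl

lemma rpow_mul_wInt_le_weakMorreyNormE_rpow (hp : 0 < p) {g : Euc n → ℝ≥0∞} {x : Euc n}
    {r : ℝ} (hr : 0 < r) (hw : wInt n w (ball x r) ≠ ⊤) {A : ℝ≥0∞}
    (hA : ∀ y ∈ ball x r, A ≤ g y) :
    A ^ p * (ENNReal.ofReal (r ^ (-lam)) * wInt n w (ball x r)) ≤
      weakMorreyNormE n p lam w g ^ p := by
  set K := ENNReal.ofReal (r ^ (-lam)) * wInt n w (ball x r)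
  rcases eq_or_ne K 0 with hK | hK
  · rw [hK, mul_zero]; exact zero_le
  have hKtop : K ≠ ⊤ := ENNReal.mul_ne_top ENNReal.ofReal_ne_top hw
  have hlevel : ∀ t : ℝ≥0, 0 < t → (t : ℝ≥0∞) < A → (t : ℝ≥0∞) ^ p * K ≤
      weakMorreyNormE n p lam w g ^ p := by
    intro t ht htA
    have hsub : ball x r ⊆ {y ∈ ball x r | ENNReal.ofReal t < g y} := fun y hy =>
      ⟨hy, by simpa using htA.trans_le (hA y hy)⟩
    have hterm : (ENNReal.ofReal ((t : ℝ) ^ p) * ENNReal.ofReal (r ^ (-lam)) *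
        wInt n w {y ∈ ball x r | ENNReal.ofReal t < g y}) ^ (1 / p) ≤
        weakMorreyNormE n p lam w g :=
      le_iSup_of_le x <| le_iSup_of_le r <| le_iSup_of_le hr <| le_iSup_of_le (t : ℝ) <|
        le_iSup_of_le (NNReal.coe_pos.2 ht) le_rfl
    rw [one_div, ENNReal.rpow_inv_le_iff hp] at hterm
    refine le_trans ?_ hterm
    rw [← ENNReal.ofReal_coe_nnreal, ENNReal.ofReal_rpow_of_nonneg t.coe_nonneg hp.le, mul_assoc]
    exact mul_le_mul_right (mul_le_mul_right (lintegral_mono_set hsub) _) _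
  have hA' : A ^ p ≤ weakMorreyNormE n p lam w g ^ p / K := by
    rw [← ENNReal.le_rpow_inv_iff hp]
    refine ENNReal.le_of_forall_pos_nnreal_lt fun t ht htA => ?_
    rw [ENNReal.le_rpow_inv_iff hp, ENNReal.le_div_iff_mul_le (Or.inl hK) (Or.inl hKtop)]
    exact hlevel t ht htA
  rwa [ENNReal.le_div_iff_mul_le (Or.inl hK) (Or.inl hKtop)] at hA'

lemma average_rpow_mul_wInt_le (hp : 0 < p) (hbd : MaximalWeakMorreyBounded n p lam w C)
    {f : Euc n → ℝ} (hf : Measurable f) (hfM : morreyNorm n p lam w f < ⊤) {x : Euc n} {r : ℝ}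
    (hr : 0 < r) (hw : wInt n w (ball x r) ≠ ⊤) :
    ((volume (ball x r))⁻¹ * ∫⁻ y in ball x r, ENNReal.ofReal |f y|) ^ p *
        (ENNReal.ofReal (r ^ (-lam)) * wInt n w (ball x r)) ≤
      (C * morreyNorm n p lam w f) ^ p :=
  (rpow_mul_wInt_le_weakMorreyNormE_rpow hp hr hw fun _ hy => average_le_maximal f hr hy).trans
    (ENNReal.rpow_le_rpow (hbd f hf hfM) hp.le)

end Testing

section OneZero

variable {n : ℕ} {w : Euc n → ℝ} {C : ℝ≥0∞}

lemma morreyNorm_one_zero_le (f : Euc n → ℝ) :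
    morreyNorm n 1 0 w f ≤ ∫⁻ y, ENNReal.ofReal (|f y| * w y) := by
  refine iSup₂_le fun x r => iSup_le fun _ => ?_
  simpa using setLIntegral_le_lintegral (ball x r) _

lemma memAp_one_of_maximal_bounded (hw : IsWeight n w) (hwm : Measurable w) (hC : C ≠ ⊤)
    (hbd : MaximalWeakMorreyBounded n 1 0 w C) : MemAp n 1 w := by
  rw [MemAp, muckConst, if_pos rfl]
  refine (sInf_le ?_).trans_lt (ENNReal.add_lt_top.2 ⟨hC.lt_top, ENNReal.one_lt_top⟩)
  intro x r hr
  refine ae_le_mul_of_measure_mul_le_setLIntegral measurableSet_ball hwm.ennreal_ofReal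
    (hw.wInt_ball_ne_top x r) hC fun E hEB hE => ?_
  set f : Euc n → ℝ := E.indicator fun _ => 1
  have hfB : ∫⁻ y in ball x r, ENNReal.ofReal |f y| = volume E := by
    have hind : ∀ y, ENNReal.ofReal |f y| = E.indicator 1 y := fun y => by
      by_cases hy : y ∈ E <;> simp [f, hy]
    rw [lintegral_congr hind, lintegral_indicator_one hE, Measure.restrict_apply hE,
      inter_eq_left.2 hEB]
  have hfM : morreyNorm n 1 0 w f ≤ wInt n w E := by
    have hind : ∀ y, ENNReal.ofReal (|f y| * w y) =
        E.indicator (fun y => ENNReal.ofReal (w y)) y := fun y => by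
      by_cases hy : y ∈ E <;> simp [f, hy]
    refine (morreyNorm_one_zero_le f).trans_eq ?_
    rw [lintegral_congr hind, lintegral_indicator hE, wInt]
  have htest := average_rpow_mul_wInt_le (f := f) one_pos hbd (measurable_const.indicator hE)
    (hfM.trans_lt (lt_of_le_of_lt (lintegral_mono_set hEB) (hw.wInt_ball_ne_top x r).lt_top)) hr
    (hw.wInt_ball_ne_top x r)
  simp only [ENNReal.rpow_one, neg_zero, Real.rpow_zero, ENNReal.ofReal_one, one_mul, hfB] at htest
  calc volume E * (wInt n w (ball x r) / volume (ball x r))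
      = (volume (ball x r))⁻¹ * volume E * wInt n w (ball x r) := by rw [div_eq_mul_inv]; ring
    _ ≤ C * morreyNorm n 1 0 w f := htest
    _ ≤ C * wInt n w E := mul_le_mul_right hfM C

end OneZero

section Ap

variable {n : ℕ} {p lam : ℝ} {w : Euc n → ℝ} {C : ℝ≥0∞}

lemma ofReal_indicator_min_rpow_mul_le (hw : ∀ y, 0 ≤ w y) (hp : 0 < p) {e θ : ℝ} (he : e < 0)
    (hexp : p + e⁻¹ = θ) (hθ : 0 ≤ θ) (s : Set (Euc n)) {k : ℝ} (hk : 0 ≤ k) (y : Euc n) :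
    ENNReal.ofReal (|s.indicator (fun y => min (w y ^ e) k) y| ^ p * w y) ≤
      ENNReal.ofReal |s.indicator (fun y => min (w y ^ e) k) y| ^ θ := by
  by_cases hy : y ∈ s
  · have htrunc : 0 ≤ min (w y ^ e) k := le_min (Real.rpow_nonneg (hw y) e) hk
    rw [ENNReal.ofReal_rpow_of_nonneg (abs_nonneg _) hθ, indicator_of_mem hy, abs_of_nonneg htrunc]
    exact ENNReal.ofReal_le_ofReal
      (Real.rpow_mul_le_rpow_of_le_rpow hp he hexp (hw y) htrunc (min_le_left _ _))
  · simp [hy, Real.zero_rpow hp.ne']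

lemma inv_volume_ball_mul_rpow_mul (hlam0 : 0 ≤ lam) (hn : (n : ℝ) ≠ 0)
    (hθ : 0 ≤ 1 - lam / n) {x : Euc n} {r : ℝ} (hr : 0 < r) {S : ℝ≥0∞} (hS0 : S ≠ 0)
    (hStop : S ≠ ⊤) (W : ℝ≥0∞) :
    ((volume (ball x r))⁻¹ * S) ^ p * (ENNReal.ofReal (r ^ (-lam)) * W) =
      W / volume (ball x r) * (S / volume (ball x r)) ^ (p + lam / n - 1) *
        (volume (ball (0 : Euc n) 1) ^ (lam / n) * S ^ (1 - lam / n)) := by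
  have hV0 : volume (ball x r) ≠ 0 := (measure_ball_pos volume x hr).ne'
  have hVtop : volume (ball x r) ≠ ⊤ := measure_ball_lt_top.ne
  have hVS0 : (volume (ball x r))⁻¹ * S ≠ 0 := mul_ne_zero (ENNReal.inv_ne_zero.2 hVtop) hS0
  have hVStop : (volume (ball x r))⁻¹ * S ≠ ⊤ :=
    ENNReal.mul_ne_top (ENNReal.inv_ne_top.2 hV0) hStop
  calc ((volume (ball x r))⁻¹ * S) ^ p * (ENNReal.ofReal (r ^ (-lam)) * W)
      = ((volume (ball x r))⁻¹ * S) ^ (p + lam / n - 1) *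
          ((volume (ball x r))⁻¹ * S) ^ (1 - lam / n) * (ENNReal.ofReal (r ^ (-lam)) * W) := by
        rw [← ENNReal.rpow_add _ _ hVS0 hVStop, sub_add_sub_cancel, add_sub_cancel_right]
    _ = ((volume (ball x r))⁻¹ ^ (1 - lam / n) * ENNReal.ofReal (r ^ (-lam))) *
          (W * ((volume (ball x r))⁻¹ * S) ^ (p + lam / n - 1) * S ^ (1 - lam / n)) := by
        rw [ENNReal.mul_rpow_of_nonneg _ _ hθ]; ring
    _ = _ := by rw [inv_volume_ball_rpow_mul hlam0 hn x hr, ENNReal.div_eq_inv_mul,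
          ENNReal.div_eq_inv_mul]; ring

lemma ofReal_abs_indicator_min_rpow (hw : ∀ y, 0 ≤ w y) (s : Set (Euc n)) {e k : ℝ} (hk : 0 ≤ k)
    (y : Euc n) :
    ENNReal.ofReal |s.indicator (fun y => min (w y ^ e) k) y| =
      s.indicator (fun y => ENNReal.ofReal (min (w y ^ e) k)) y := by
  have htrunc : 0 ≤ min (w y ^ e) k := le_min (Real.rpow_nonneg (hw y) e) hk
  by_cases hy : y ∈ s <;> simp [hy, abs_of_nonneg htrunc]

lemma morreyNorm_indicator_min_rpow_le (hw : ∀ y, 0 ≤ w y) (hwm : Measurable w) (hp : 0 < p)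
    (hlam0 : 0 ≤ lam) (hlam : lam < n) (hq : 1 < p + lam / n) {s : Set (Euc n)}
    (hs : MeasurableSet s) {k : ℝ} (hk : 0 ≤ k) :
    morreyNorm n p lam w
        (s.indicator fun y => min (w y ^ (1 - (p + lam / n) / (p + lam / n - 1))) k) ≤
      (volume (ball (0 : Euc n) 1) ^ (lam / n) * (∫⁻ y in s,
        ENNReal.ofReal (min (w y ^ (1 - (p + lam / n) / (p + lam / n - 1))) k)) ^ (1 - lam / n))
          ^ (1 / p) := by
  set q := p + lam / n with hq_def
  have hθ : 0 ≤ 1 - lam / n := by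
    rw [sub_nonneg, div_le_one (hlam0.trans_lt hlam)]; exact hlam.le
  have hq1 : 0 < q - 1 := by linarith
  have he : 1 - q / (q - 1) = -(q - 1)⁻¹ := by field_simp [hq1.ne']; ring
  have hexp : p + (1 - q / (q - 1))⁻¹ = 1 - lam / n := by rw [he, inv_neg, inv_inv, hq_def]; ring
  have hM := morreyNorm_le_of_rpow_mul_le hp.le hlam0 hlam
    (((hwm.pow_const _).min measurable_const).indicator hs)
    (ofReal_indicator_min_rpow_mul_le hw hp (by rw [he]; exact neg_neg_of_pos (inv_pos.2 hq1))
      hexp hθ s hk)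
  rwa [lintegral_congr (ofReal_abs_indicator_min_rpow hw s hk), lintegral_indicator hs] at hM

lemma wInt_div_mul_average_min_rpow_le (hw : IsWeight n w) (hwm : Measurable w) (hp : 0 < p)
    (hlam0 : 0 ≤ lam) (hlam : lam < n) (hq : 1 < p + lam / n)
    (hbd : MaximalWeakMorreyBounded n p lam w C) {x : Euc n} {r : ℝ} (hr : 0 < r) (k : ℕ) :
    wInt n w (ball x r) / volume (ball x r) *
      ((∫⁻ y in ball x r,
          ENNReal.ofReal (min (w y ^ (1 - (p + lam / n) / (p + lam / n - 1))) k)) /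
        volume (ball x r)) ^ (p + lam / n - 1) ≤ C ^ p := by
  set e := 1 - (p + lam / n) / (p + lam / n - 1)
  set S := ∫⁻ y in ball x r, ENNReal.ofReal (min (w y ^ e) k)
  set v := volume (ball (0 : Euc n) 1)
  have hn : (0 : ℝ) < n := hlam0.trans_lt hlam
  have hθ : 0 < 1 - lam / n := by rw [sub_pos, div_lt_one hn]; exact hlam
  have hM := morreyNorm_indicator_min_rpow_le hw.1 hwm hp hlam0 hlam hq
    (measurableSet_ball (x := x) (ε := r)) (k.cast_nonneg (α := ℝ))
  have hStop : S ≠ ⊤ := by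
    have hVtop : volume (ball x r) ≠ ⊤ := measure_ball_lt_top.ne
    refine ne_top_of_le_ne_top (ENNReal.mul_ne_top (ENNReal.ofReal_ne_top (r := k)) hVtop) ?_
    rw [← setLIntegral_const]
    exact setLIntegral_mono measurable_const fun y _ => ENNReal.ofReal_le_ofReal (min_le_right _ _)
  rcases eq_or_ne S 0 with hS0 | hS0
  · rw [hS0, ENNReal.zero_div, ENNReal.zero_rpow_of_pos (by linarith), mul_zero]; exact zero_le
  have hbound_ne0 : v ^ (lam / n) * S ^ (1 - lam / n) ≠ 0 := mul_ne_zero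
    (ENNReal.rpow_pos (measure_ball_pos volume _ one_pos) measure_ball_lt_top.ne).ne'
    (ENNReal.rpow_pos (pos_iff_ne_zero.2 hS0) hStop).ne'
  have hbound_top : v ^ (lam / n) * S ^ (1 - lam / n) ≠ ⊤ := ENNReal.mul_ne_top
    (ENNReal.rpow_ne_top_of_nonneg (div_nonneg hlam0 hn.le) measure_ball_lt_top.ne)
    (ENNReal.rpow_ne_top_of_nonneg hθ.le hStop)
  have htest := average_rpow_mul_wInt_le hp hbd
    (((hwm.pow_const e).min measurable_const).indicator measurableSet_ball)
    (hM.trans_lt (ENNReal.rpow_lt_top_of_nonneg (by positivity) hbound_top)) hr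
    (hw.wInt_ball_ne_top x r)
  rw [setLIntegral_congr_fun measurableSet_ball fun y hy => by
      rw [ofReal_abs_indicator_min_rpow hw.1 _ k.cast_nonneg, indicator_of_mem hy],
    inv_volume_ball_mul_rpow_mul hlam0 hn.ne' hθ.le hr hS0 hStop] at htest
  refine (ENNReal.mul_le_mul_iff_left hbound_ne0 hbound_top).1 (htest.trans ?_)
  rw [ENNReal.mul_rpow_of_nonneg _ _ hp.le]
  refine mul_le_mul_right ((ENNReal.rpow_le_rpow hM hp.le).trans_eq ?_) _
  rw [← ENNReal.rpow_mul, one_div_mul_cancel hp.ne', ENNReal.rpow_one]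

lemma memAp_of_maximal_bounded (hw : IsWeight n w) (hwm : Measurable w) (hp : 0 < p)
    (hlam0 : 0 ≤ lam) (hlam : lam < n) (hq : 1 < p + lam / n) (hC : C ≠ ⊤)
    (hbd : MaximalWeakMorreyBounded n p lam w C) : MemAp n (p + lam / n) w := by
  rw [MemAp, muckConst, if_neg hq.ne', ApConst]
  refine lt_of_le_of_lt (iSup₂_le fun x r => iSup_le fun hr => ?_)
    (ENNReal.rpow_lt_top_of_nonneg hp.le hC)
  have hV0 : volume (ball x r) ≠ 0 := (measure_ball_pos volume x hr).ne'
  have hmono : Monotone fun S => (S / volume (ball x r)) ^ (p + lam / n - 1) := fun a b hab =>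
    ENNReal.rpow_le_rpow (ENNReal.div_le_div_right hab _) (by linarith)
  have hcont : Continuous fun S => (S / volume (ball x r)) ^ (p + lam / n - 1) :=
    (ENNReal.continuous_rpow_const).comp (ENNReal.continuous_div_const _ hV0)
  unfold wInt
  rw [lintegral_ofReal_eq_iSup_lintegral_ofReal_min (hwm.pow_const _),
    hmono.map_iSup_of_continuousAt hcont.continuousAt
      (by simp [ENNReal.zero_rpow_of_pos (sub_pos.2 hq)]), ENNReal.mul_iSup]
  exact iSup_le fun k => wInt_div_mul_average_min_rpow_le hw hwm hp hlam0 hlam hq hbd hr k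

end Ap

theorem statement14_general (n : ℕ) (p lam : ℝ) (hp : 1 ≤ p)
    (hlam0 : 0 ≤ lam) (hlam : lam < (n : ℝ))
    (w : Euc n → ℝ) (hw : IsWeight n w)
    (C : ℝ≥0∞) (hC : C < ⊤)
    (hbd : ∀ f : Euc n → ℝ, Measurable f → morreyNorm n p lam w f < ⊤ →
      weakMorreyNormE n p lam w (maximal n f) ≤ C * morreyNorm n p lam w f) :
    MemAp n (p + lam / n) w := by
  obtain ⟨w₀, hw₀, hw₀m, hww₀⟩ := hw.exists_measurable_ae_eq
  have hbd₀ : MaximalWeakMorreyBounded n p lam w₀ C := by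
    simpa only [MaximalWeakMorreyBounded, morreyNorm_congr_ae hww₀,
      weakMorreyNormE_congr_ae hww₀] using hbd
  rw [memAp_congr_ae hww₀]
  have hn : (0 : ℝ) < n := hlam0.trans_lt hlam
  have hlamn : 0 ≤ lam / n := div_nonneg hlam0 hn.le
  rcases (le_add_of_le_of_nonneg hp hlamn).eq_or_lt with hq | hq
  · obtain rfl : p = 1 := by linarith
    obtain rfl : lam = 0 := by
      have : lam / n = 0 := by linarith
      simpa [hn.ne'] using this
    simpa using memAp_one_of_maximal_bounded hw₀ hw₀m hC.ne hbd₀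
  · exact memAp_of_maximal_bounded hw₀ hw₀m (by linarith) hlam0 hlam hq hC.ne hbd₀

/-- if the Hardy–Littlewood maximal operator is bounded from `L^{p,λ}(w)` to
`WL^{p,λ}(w)`, then `w ∈ A_{p + λ/n}`. -/
theorem statement14 (n : ℕ) (hn : 1 ≤ n) (p lam : ℝ) (hp : 1 ≤ p)
    (hlam0 : 0 ≤ lam) (hlam : lam < (n : ℝ))
    (w : Euc n → ℝ) (hw : IsWeight n w)
    (C : ℝ≥0∞) (hC : C < ⊤)
    (hbd : ∀ f : Euc n → ℝ, Measurable f → morreyNorm n p lam w f < ⊤ →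
      weakMorreyNormE n p lam w (maximal n f) ≤ C * morreyNorm n p lam w f) :
    MemAp n (p + lam / n) w :=
  statement14_general n p lam hp hlam0 hlam w hw C hC hbd
end

section
/- Let n ≥ 1 and 0 < λ < n. There is a constant C such that ‖Mf‖_{WL^{1,λ}(|x|^{λ−n})} ≤ C ‖f‖_{L^{1,λ}(|x|^{λ−n})} for every f with ‖f‖_{L^{1,λ}(|x|^{λ−n})} < ∞; that is, the Hardy–Littlewood maximal operator M is bounded from L^{1,λ}(|x|^{λ−n}) to the weak Morrey space WL^{1,λ}(|x|^{λ−n}). -/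
open MeasureTheory Metric ENNReal NNReal Topology Filter

/-!
Split `f = f₁ + f₂` with `f₁ = f · 1_{B(x₀, 2r)}`. The weight `u(x) = |x|^{λ-n}` satisfies
`u(B(x, r)) ≲ r^n (r + |x|)^{λ-n}`, which makes it an `A₁` weight, so the Vitali covering argument
gives `t · u{Mf₁ > t} ≲ ∫ |f₁| u ≤ ‖f‖ (2r)^λ`. For `y ∈ B(x₀, r)`, only balls `B(z, ρ)` with
`ρ > r/2` see `f₂`; on them `|f| ≤ (ρ + |z|)^{n-λ} |f| u`, so `Mf₂ ≲ ‖f‖ ((r + |x₀|)/r)^{n-λ}`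
on `B(x₀, r)`, and this factor is exactly compensated by the bound for `u(B(x₀, r))`.
-/

open Set

section MaximalFunction

variable {n : ℕ}

lemma volume_ball_eq (x : Euc n) {r : ℝ} (hr : 0 < r) :
    volume (ball x r) = ENNReal.ofReal (r ^ n) * volume (ball (0 : Euc n) 1) := by
  rw [Measure.addHaar_ball_of_pos volume x hr, finrank_euclideanSpace_fin]

lemma exists_ball_of_lt_maximal {g : Euc n → ℝ} {y : Euc n} {c : ℝ≥0∞}
    (h : c < maximal n g y) : ∃ z ρ, 0 < ρ ∧ y ∈ ball z ρ ∧
      c * volume (ball z ρ) ≤ ∫⁻ v in ball z ρ, ENNReal.ofReal |g v| := by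
  simp only [maximal, lt_iSup_iff] at h
  obtain ⟨z, ρ, hρ, hy, hc⟩ := h
  refine ⟨z, ρ, hρ, hy, ?_⟩
  rw [← ENNReal.le_div_iff_mul_le (Or.inl (measure_ball_pos volume z hρ).ne')
    (Or.inl measure_ball_lt_top.ne), ENNReal.div_eq_inv_mul]
  exact hc.le

lemma ballAverage_le_maximal (g : Euc n → ℝ) {y z : Euc n} {ρ : ℝ} (hρ : 0 < ρ)
    (hy : y ∈ ball z ρ) :
    (volume (ball z ρ))⁻¹ * ∫⁻ v in ball z ρ, ENNReal.ofReal |g v| ≤ maximal n g y :=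
  le_iSup₂_of_le z ρ (le_iSup₂_of_le (κ := fun _ => y ∈ ball z ρ) hρ hy le_rfl)

lemma maximal_le_maximal_indicator_add {s : Set (Euc n)} (hs : MeasurableSet s)
    (g : Euc n → ℝ) (y : Euc n) :
    maximal n g y ≤ maximal n (s.indicator g) y + maximal n (sᶜ.indicator g) y := by
  have hsplit : ∀ t : Set (Euc n), MeasurableSet t → ∀ z ρ,
      ∫⁻ v in ball z ρ, ENNReal.ofReal |t.indicator g v| =
        ∫⁻ v in ball z ρ ∩ t, ENNReal.ofReal |g v| := by
    intro t ht z ρ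
    have hpt : ∀ v, ENNReal.ofReal |t.indicator g v| =
        t.indicator (fun v => ENNReal.ofReal |g v|) v := fun v => by
      by_cases hv : v ∈ t <;> simp [hv]
    simp_rw [hpt, setLIntegral_indicator ht, inter_comm]
  refine iSup_le fun z => iSup_le fun ρ => iSup_le fun hρ => iSup_le fun hy => ?_
  calc (volume (ball z ρ))⁻¹ * ∫⁻ v in ball z ρ, ENNReal.ofReal |g v|
      = (volume (ball z ρ))⁻¹ * (∫⁻ v in ball z ρ, ENNReal.ofReal |s.indicator g v|) +
          (volume (ball z ρ))⁻¹ * ∫⁻ v in ball z ρ, ENNReal.ofReal |sᶜ.indicator g v| := by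
        rw [← mul_add, hsplit s hs, hsplit sᶜ hs.compl, ← sdiff_eq,
          lintegral_inter_add_sdiff _ _ hs]
    _ ≤ _ := add_le_add (ballAverage_le_maximal _ hρ hy) (ballAverage_le_maximal _ hρ hy)

lemma sep_two_mul_lt_maximal_subset {s : Set (Euc n)} (hs : MeasurableSet s) (g : Euc n → ℝ)
    (B : Set (Euc n)) (c : ℝ≥0∞) : {y ∈ B | 2 * c < maximal n g y} ⊆
      {y | c < maximal n (s.indicator g) y} ∪ {y ∈ B | c < maximal n (sᶜ.indicator g) y} := by
  rintro y ⟨hy, hlt⟩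
  by_contra h
  simp only [mem_union, mem_ofPred_eq, not_or, not_lt, not_and] at h
  exact hlt.not_ge ((maximal_le_maximal_indicator_add hs g y).trans
    ((add_le_add h.1 (h.2 hy)).trans_eq (two_mul c).symm))

lemma mul_wInt_sep_lt_le {w : Euc n → ℝ} {g : Euc n → ℝ≥0∞} {B : Set (Euc n)} {A : ℝ≥0∞}
    (hg : ∀ y ∈ B, g y ≤ A) (c : ℝ≥0∞) : c * wInt n w {y ∈ B | c < g y} ≤ A * wInt n w B := by
  by_cases hc : c < A
  · exact mul_le_mul' hc.le (lintegral_mono_set (sep_subset _ _))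
  · have hempty : {y ∈ B | c < g y} = ∅ :=
      eq_empty_of_forall_notMem fun y ⟨hy, hlt⟩ => hc (hlt.trans_le (hg y hy))
    simp [hempty, wInt]

/-- The `A₁` condition, with the fourfold enlargement of the Vitali covering lemma built in. -/
def IsA1OnEnlargedBalls (n : ℕ) (K : ℝ≥0∞) (w : Euc n → ℝ) : Prop :=
  ∀ (z : Euc n) (ρ : ℝ), 0 < ρ → ∀ᵐ y ∂volume.restrict (ball z ρ),
    wInt n w (closedBall z (4 * ρ)) ≤ K * volume (ball z ρ) * ENNReal.ofReal (w y)

lemma IsA1OnEnlargedBalls.mul_wInt_le {K : ℝ≥0∞} {w : Euc n → ℝ} (hw : IsA1OnEnlargedBalls n K w)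
    (hK : K ≠ ⊤) {g : Euc n → ℝ} {c : ℝ≥0∞} {z : Euc n} {ρ : ℝ} (hρ : 0 < ρ)
    (hc : c * volume (ball z ρ) ≤ ∫⁻ v in ball z ρ, ENNReal.ofReal |g v|) :
    c * wInt n w (closedBall z (4 * ρ)) ≤
      K * ∫⁻ v in ball z ρ, ENNReal.ofReal (|g v| * w v) := by
  set V := volume (ball z ρ)
  have hV0 : V ≠ 0 := (measure_ball_pos volume z hρ).ne'
  have hVtop : V ≠ ⊤ := measure_ball_lt_top.ne
  refine (ENNReal.mul_le_mul_iff_right hV0 hVtop).1 ?_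
  calc V * (c * wInt n w (closedBall z (4 * ρ)))
      = wInt n w (closedBall z (4 * ρ)) * (c * V) := by ring
    _ ≤ wInt n w (closedBall z (4 * ρ)) * ∫⁻ v in ball z ρ, ENNReal.ofReal |g v| := by gcongr
    _ ≤ ∫⁻ v in ball z ρ, wInt n w (closedBall z (4 * ρ)) * ENNReal.ofReal |g v| :=
        lintegral_const_mul_le _ _
    _ ≤ ∫⁻ v in ball z ρ, K * V * ENNReal.ofReal (|g v| * w v) := by
        refine lintegral_mono_ae ((hw z ρ hρ).mono fun v hv => ?_)
        rw [ENNReal.ofReal_mul (abs_nonneg _), mul_comm (ENNReal.ofReal |g v|), ← mul_assoc]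
        gcongr
    _ = V * (K * ∫⁻ v in ball z ρ, ENNReal.ofReal (|g v| * w v)) := by
        rw [lintegral_const_mul' _ _ (ENNReal.mul_ne_top hK hVtop)]; ring

lemma exists_radius_le_of_measure_ball_le [NeZero n] {A : ℝ≥0∞} (hA : A ≠ ⊤) :
    ∃ R, ∀ (z : Euc n) (ρ : ℝ), 0 < ρ → volume (ball z ρ) ≤ A → ρ ≤ R := by
  set V₁ := volume (ball (0 : Euc n) 1)
  have hV₁ : V₁ ≠ 0 := (measure_ball_pos volume _ one_pos).ne'
  refine ⟨max 1 (A / V₁).toReal, fun z ρ hρ hle => ?_⟩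
  rw [volume_ball_eq z hρ, ← ENNReal.le_div_iff_mul_le (Or.inl hV₁) (Or.inr hA),
    ENNReal.ofReal_le_iff_le_toReal (ENNReal.div_ne_top hA hV₁)] at hle
  rcases le_total ρ 1 with hρ1 | hρ1
  · exact le_max_of_le_left hρ1
  · exact le_max_of_le_right ((le_self_pow₀ hρ1 (NeZero.ne n)).trans hle)

theorem IsA1OnEnlargedBalls.weakType_maximal [NeZero n] {K : ℝ≥0∞} {w : Euc n → ℝ}
    (hw : IsA1OnEnlargedBalls n K w) (hK : K ≠ ⊤) {g : Euc n → ℝ}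
    (hg : ∫⁻ v, ENNReal.ofReal |g v| ≠ ⊤) {c : ℝ≥0∞} (hc : c ≠ 0) :
    c * wInt n w {y | c < maximal n g y} ≤ K * ∫⁻ v, ENNReal.ofReal (|g v| * w v) := by
  set E := {y | c < maximal n g y}
  choose! Z P hP hmem hball using fun y (hy : y ∈ E) => exists_ball_of_lt_maximal hy
  obtain ⟨R, hR⟩ := exists_radius_le_of_measure_ball_le (n := n) (ENNReal.div_ne_top hg hc)
  have hPR : ∀ y ∈ E, P y ≤ R := fun y hy => hR _ _ (hP y hy) <| by
    rw [ENNReal.le_div_iff_mul_le (Or.inl hc) (Or.inr hg), mul_comm]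
    exact (hball y hy).trans (setLIntegral_le_lintegral _ _)
  obtain ⟨U, hUE, hUdisj, hUcov⟩ :=
    Vitali.exists_disjoint_subfamily_covering_enlargement_closedBall E Z P R hPR 4 (by norm_num)
  have hBdisj : U.PairwiseDisjoint fun b => ball (Z b) (P b) :=
    hUdisj.mono fun b => ball_subset_closedBall
  have hUc : U.Countable := hBdisj.countable_of_isOpen (fun _ _ => isOpen_ball)
    fun b hb => nonempty_ball.2 (hP b (hUE hb))
  have hcov : E ⊆ ⋃ b ∈ U, closedBall (Z b) (4 * P b) := fun y hy => by
    obtain ⟨b, hbU, hsub⟩ := hUcov y hy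
    exact mem_biUnion hbU (hsub (ball_subset_closedBall (hmem y hy)))
  have := hUc.to_subtype
  calc c * wInt n w E
      ≤ c * ∑' b : U, wInt n w (closedBall (Z b) (4 * P b)) := by
        gcongr
        refine (lintegral_mono_set hcov).trans ?_
        rw [biUnion_eq_iUnion]
        exact lintegral_iUnion_le _ _
    _ = ∑' b : U, c * wInt n w (closedBall (Z b) (4 * P b)) := ENNReal.tsum_mul_left.symm
    _ ≤ ∑' b : U, K * ∫⁻ v in ball (Z b) (P b), ENNReal.ofReal (|g v| * w v) :=
        ENNReal.tsum_le_tsum fun b => hw.mul_wInt_le hK (hP _ (hUE b.2)) (hball _ (hUE b.2))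
    _ = K * ∫⁻ v in ⋃ b ∈ U, ball (Z b) (P b), ENNReal.ofReal (|g v| * w v) := by
        rw [lintegral_biUnion hUc (fun _ _ => measurableSet_ball) hBdisj, ENNReal.tsum_mul_left]
    _ ≤ K * ∫⁻ v, ENNReal.ofReal (|g v| * w v) := by
        gcongr
        exact Measure.restrict_le_self

end MaximalFunction

section PolarCoordinates

variable {E : Type*} [NormedAddCommGroup E] [NormedSpace ℝ E] [FiniteDimensional ℝ E]
  [MeasurableSpace E] [BorelSpace E] [Nontrivial E] (μ : Measure E) [μ.IsAddHaarMeasure]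

theorem integrableOn_ball_zero_norm_rpow_and_integral_eq {s R : ℝ}
    (hs : 0 < s + Module.finrank ℝ E) (hR : 0 < R) :
    IntegrableOn (fun x : E => ‖x‖ ^ s) (ball 0 R) μ ∧
      ∫ x in ball (0 : E) R, ‖x‖ ^ s ∂μ = Module.finrank ℝ E * μ.real (ball 0 1) *
        (R ^ (s + Module.finrank ℝ E) / (s + Module.finrank ℝ E)) := by
  set d := Module.finrank ℝ E
  have hd : 1 ≤ d := Module.finrank_pos
  have hpow : EqOn (fun y : ℝ => y ^ (d - 1) • y ^ s) (fun y => y ^ (s + d - 1)) (Ioo 0 R) := by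
    intro y hy
    simp only [smul_eq_mul]
    rw [← Real.rpow_natCast, ← Real.rpow_add hy.1, Nat.cast_sub hd]
    ring_nf
  refine ⟨?_, ?_⟩
  · rw [integrableOn_fun_norm_addHaar μ (f := fun y => y ^ s),
      integrableOn_congr_fun hpow measurableSet_Ioo, intervalIntegral.integrableOn_Ioo_rpow_iff hR]
    linarith
  · have hind : ∀ x : E, (ball (0 : E) R).indicator (fun x => ‖x‖ ^ s) x =
        (Iio R).indicator (fun y => y ^ s) ‖x‖ := by
      intro x
      by_cases hx : ‖x‖ < R <;> simp [indicator, hx]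
    have hradial : ∫ y in Ioi (0:ℝ), y ^ (d - 1) • (Iio R).indicator (fun y => y ^ s) y =
        R ^ (s + d) / (s + d) := by
      simp_rw [← indicator_smul_apply (Iio R) (fun y : ℝ => y ^ (d - 1))]
      rw [setIntegral_indicator measurableSet_Iio, Ioi_inter_Iio,
        setIntegral_congr_fun measurableSet_Ioo hpow, ← integral_Ioc_eq_integral_Ioo,
        ← intervalIntegral.integral_of_le hR.le, integral_rpow (Or.inl (by linarith)),
        sub_add_cancel, Real.zero_rpow hs.ne', sub_zero]
    rw [← integral_indicator measurableSet_ball]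
    simp_rw [hind]
    rw [integral_fun_norm_addHaar μ (fun y => (Iio R).indicator (fun y => y ^ s) y), hradial,
      nsmul_eq_mul, smul_eq_mul, mul_assoc]

theorem lintegral_ball_zero_norm_rpow {s R : ℝ} (hs : 0 < s + Module.finrank ℝ E) (hR : 0 < R) :
    ∫⁻ x in ball (0 : E) R, ENNReal.ofReal (‖x‖ ^ s) ∂μ =
      ENNReal.ofReal (Module.finrank ℝ E * μ.real (ball 0 1) *
        (R ^ (s + Module.finrank ℝ E) / (s + Module.finrank ℝ E))) := by
  obtain ⟨hint, heq⟩ := integrableOn_ball_zero_norm_rpow_and_integral_eq μ hs hR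
  rw [← heq, ofReal_integral_eq_lintegral_ofReal hint
    (ae_of_all _ fun x => Real.rpow_nonneg (norm_nonneg x) s)]

end PolarCoordinates

section PowerWeight

noncomputable abbrev powerWeight (n : ℕ) (s : ℝ) : Euc n → ℝ := fun x => ‖x‖ ^ s

variable {n : ℕ} {s : ℝ}

lemma wInt_ball_powerWeight_le_of_two_mul_lt_norm (hs₀ : -(n : ℝ) < s) (hs : s ≤ 0) {x : Euc n}
    {r : ℝ} (hr : 0 < r) (hx : 2 * r < ‖x‖) : wInt n (powerWeight n s) (ball x r) ≤
      ENNReal.ofReal (3 ^ n) * volume (ball (0 : Euc n) 1) *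
        ENNReal.ofReal (r ^ n * (r + ‖x‖) ^ s) := by
  have hrx : 0 < r + ‖x‖ := by positivity
  have hpt : ∀ v ∈ ball x r, ‖v‖ ^ s ≤ 3 ^ n * (r + ‖x‖) ^ s := by
    intro v hv
    have := norm_sub_norm_le x v
    rw [mem_ball, dist_comm, dist_eq_norm] at hv
    have hv₀ : (r + ‖x‖) / 3 ≤ ‖v‖ := by linarith
    have h3 : (3 : ℝ) ^ (-s) ≤ 3 ^ n := by
      rw [← Real.rpow_natCast]
      exact Real.rpow_le_rpow_of_exponent_le (by norm_num) (by linarith)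
    calc ‖v‖ ^ s ≤ ((r + ‖x‖) / 3) ^ s := Real.rpow_le_rpow_of_nonpos (by positivity) hv₀ hs
      _ = 3 ^ (-s) * (r + ‖x‖) ^ s := by
          rw [Real.div_rpow hrx.le (by norm_num), Real.rpow_neg (by norm_num), div_eq_inv_mul]
      _ ≤ 3 ^ n * (r + ‖x‖) ^ s := by gcongr
  calc wInt n (powerWeight n s) (ball x r)
      ≤ ∫⁻ _ in ball x r, ENNReal.ofReal (3 ^ n * (r + ‖x‖) ^ s) :=
        setLIntegral_mono' measurableSet_ball fun v hv => ENNReal.ofReal_le_ofReal (hpt v hv)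
    _ = _ := by
        rw [setLIntegral_const, volume_ball_eq x hr, ENNReal.ofReal_mul (by positivity),
          ENNReal.ofReal_mul (by positivity)]
        ring

variable [NeZero n]

lemma wInt_ball_zero_powerWeight (hs₀ : -(n : ℝ) < s) {R : ℝ} (hR : 0 < R) :
    wInt n (powerWeight n s) (ball 0 R) = ENNReal.ofReal
      (n * (volume (ball (0 : Euc n) 1)).toReal / (s + n) * R ^ (s + n)) := by
  rw [wInt, lintegral_ball_zero_norm_rpow volume (by simpa using (by linarith : 0 < s + n)) hR,
    finrank_euclideanSpace_fin, Measure.real]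
  ring_nf

theorem exists_wInt_ball_powerWeight_le (hs₀ : -(n : ℝ) < s) (hs : s ≤ 0) :
    ∃ C : ℝ≥0∞, C ≠ ⊤ ∧ ∀ (x : Euc n) (r : ℝ), 0 < r →
      wInt n (powerWeight n s) (ball x r) ≤ C * ENNReal.ofReal (r ^ n * (r + ‖x‖) ^ s) := by
  set V₁ := volume (ball (0 : Euc n) 1)
  set a : ℝ := n * V₁.toReal / (s + n)
  have ha : 0 ≤ a := div_nonneg (by positivity) (by linarith)
  refine ⟨ENNReal.ofReal (3 ^ n) * (ENNReal.ofReal a + V₁),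
    ENNReal.mul_ne_top ENNReal.ofReal_ne_top (ENNReal.add_ne_top.2 ⟨ENNReal.ofReal_ne_top,
      measure_ball_lt_top.ne⟩), fun x r hr => ?_⟩
  rcases le_or_gt ‖x‖ (2 * r) with hx | hx
  swap
  · refine (wInt_ball_powerWeight_le_of_two_mul_lt_norm hs₀ hs hr hx).trans ?_
    rw [mul_add, add_mul]
    exact le_add_self
  have hsub : ball x r ⊆ ball (0 : Euc n) (3 * r) := fun y hy => by
    rw [mem_ball_zero_iff]
    rw [mem_ball, dist_eq_norm] at hy
    linarith [norm_sub_norm_le y x]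
  have hreal : a * (3 * r) ^ (s + n) ≤ 3 ^ n * a * (r ^ n * (r + ‖x‖) ^ s) := by
    rw [Real.rpow_add (by positivity), Real.rpow_natCast, mul_pow]
    have : (3 * r) ^ s ≤ (r + ‖x‖) ^ s :=
      Real.rpow_le_rpow_of_nonpos (by positivity) (by linarith) hs
    calc a * ((3 * r) ^ s * (3 ^ n * r ^ n)) ≤ a * ((r + ‖x‖) ^ s * (3 ^ n * r ^ n)) := by gcongr
      _ = _ := by ring
  calc wInt n (powerWeight n s) (ball x r)
      ≤ wInt n (powerWeight n s) (ball 0 (3 * r)) := lintegral_mono_set hsub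
    _ = ENNReal.ofReal (a * (3 * r) ^ (s + n)) := wInt_ball_zero_powerWeight hs₀ (by positivity)
    _ ≤ ENNReal.ofReal (3 ^ n * a * (r ^ n * (r + ‖x‖) ^ s)) := ENNReal.ofReal_le_ofReal hreal
    _ ≤ _ := by
        rw [ENNReal.ofReal_mul (by positivity), ENNReal.ofReal_mul (by positivity), mul_add,
          add_mul]
        exact le_self_add

theorem exists_isA1OnEnlargedBalls_powerWeight (hs₀ : -(n : ℝ) < s) (hs : s ≤ 0) :
    ∃ K : ℝ≥0∞, K ≠ ⊤ ∧ IsA1OnEnlargedBalls n K (powerWeight n s) := by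
  obtain ⟨C, hC, hball⟩ := exists_wInt_ball_powerWeight_le (n := n) hs₀ hs
  set V₁ := volume (ball (0 : Euc n) 1)
  have hV₁ : V₁ ≠ 0 := (measure_ball_pos volume _ one_pos).ne'
  refine ⟨C * ENNReal.ofReal (5 ^ n) * V₁⁻¹,
    ENNReal.mul_ne_top (ENNReal.mul_ne_top hC ENNReal.ofReal_ne_top) (ENNReal.inv_ne_top.2 hV₁),
    fun z ρ hρ => ?_⟩
  filter_upwards [ae_restrict_mem measurableSet_ball,
    ae_restrict_of_ae (Measure.ae_ne volume 0)] with y hy hy₀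
  have hsub : closedBall z (4 * ρ) ⊆ ball y (5 * ρ) := fun v hv => by
    rw [mem_closedBall] at hv
    rw [mem_ball] at hy ⊢
    linarith [dist_triangle_right v y z]
  have hreal : (5 * ρ) ^ n * (5 * ρ + ‖y‖) ^ s ≤ 5 ^ n * ρ ^ n * ‖y‖ ^ s := by
    have hy' : (5 * ρ + ‖y‖) ^ s ≤ ‖y‖ ^ s :=
      Real.rpow_le_rpow_of_nonpos (norm_pos_iff.2 hy₀) (by linarith) hs
    calc (5 * ρ) ^ n * (5 * ρ + ‖y‖) ^ s ≤ (5 * ρ) ^ n * ‖y‖ ^ s := by gcongr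
      _ = 5 ^ n * ρ ^ n * ‖y‖ ^ s := by rw [mul_pow]
  calc wInt n (powerWeight n s) (closedBall z (4 * ρ))
      ≤ wInt n (powerWeight n s) (ball y (5 * ρ)) := lintegral_mono_set hsub
    _ ≤ C * ENNReal.ofReal (5 ^ n * ρ ^ n * ‖y‖ ^ s) :=
        (hball y _ (by positivity)).trans (by gcongr)
    _ = C * ENNReal.ofReal (5 ^ n) * (V₁⁻¹ * V₁) * ENNReal.ofReal (ρ ^ n) *
          ENNReal.ofReal (‖y‖ ^ s) := by
        rw [ENNReal.inv_mul_cancel hV₁ measure_ball_lt_top.ne, ENNReal.ofReal_mul (by positivity),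
          ENNReal.ofReal_mul (by positivity)]
        ring
    _ = _ := by
        rw [volume_ball_eq z hρ]
        ring

lemma lintegral_ball_le_mul_lintegral_mul_powerWeight (hs : s ≤ 0) (f : Euc n → ℝ) (z : Euc n)
    (ρ : ℝ) : ∫⁻ v in ball z ρ, ENNReal.ofReal |f v| ≤ ENNReal.ofReal ((ρ + ‖z‖) ^ (-s)) *
      ∫⁻ v in ball z ρ, ENNReal.ofReal (|f v| * powerWeight n s v) := by
  rw [← lintegral_const_mul' _ _ ENNReal.ofReal_ne_top]
  refine lintegral_mono_ae ?_
  filter_upwards [ae_restrict_mem measurableSet_ball,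
    ae_restrict_of_ae (Measure.ae_ne volume 0)] with v hv hv₀
  have hvR : ‖v‖ ≤ ρ + ‖z‖ := by
    rw [mem_ball, dist_eq_norm] at hv
    linarith [norm_le_norm_sub_add v z]
  have hv₀' : 0 < ‖v‖ := norm_pos_iff.2 hv₀
  have hR : 0 < ρ + ‖z‖ := hv₀'.trans_le hvR
  have hone : 1 ≤ (ρ + ‖z‖) ^ (-s) * ‖v‖ ^ s := by
    calc (1 : ℝ) = (ρ + ‖z‖) ^ (-s) * (ρ + ‖z‖) ^ s := by
          rw [Real.rpow_neg hR.le, inv_mul_cancel₀ (by positivity)]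
      _ ≤ (ρ + ‖z‖) ^ (-s) * ‖v‖ ^ s :=
          mul_le_mul_of_nonneg_left (Real.rpow_le_rpow_of_nonpos hv₀' hvR hs) (by positivity)
  rw [← ENNReal.ofReal_mul (by positivity)]
  refine ENNReal.ofReal_le_ofReal ?_
  calc |f v| ≤ |f v| * ((ρ + ‖z‖) ^ (-s) * ‖v‖ ^ s) := le_mul_of_one_le_right (abs_nonneg _) hone
    _ = _ := by ring

end PowerWeight

lemma add_norm_le_of_not_ball_subset_ball {E : Type*} [SeminormedAddCommGroup E] {x₀ y z : E}
    {r ρ : ℝ} (hr : 0 < r) (hy : y ∈ ball x₀ r) (hyz : y ∈ ball z ρ)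
    (h : ¬ball z ρ ⊆ ball x₀ (2 * r)) : ρ + ‖z‖ ≤ 4 * (r + ‖x₀‖) / r * ρ := by
  obtain ⟨v, hvz, hvx⟩ := not_subset.1 h
  rw [mem_ball] at hvz hvx hyz hy
  have hρ : 0 < ρ := dist_nonneg.trans_lt hyz
  have hρr : r < 2 * ρ := by
    linarith [dist_triangle4 v z y x₀, dist_comm y z]
  have hz : ‖z‖ < ρ + r + ‖x₀‖ := by
    linarith [norm_le_norm_sub_add z x₀, dist_triangle z y x₀, dist_eq_norm z x₀, dist_comm y z]
  rw [div_mul_eq_mul_div, le_div_iff₀ hr]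
  nlinarith [mul_lt_mul_of_pos_left hz hr, mul_nonneg hρ.le (norm_nonneg x₀),
    mul_le_mul_of_nonneg_left hρr.le (add_nonneg hr.le (norm_nonneg x₀))]

lemma four_mul_div_rpow_mul_pow_mul_rpow {r R : ℝ} (hr : 0 < r) (hR : 0 < R) (n : ℕ) (lam : ℝ) :
    (4 * R / r) ^ ((n : ℝ) - lam) * (r ^ n * R ^ (lam - n)) = 4 ^ ((n : ℝ) - lam) * r ^ lam := by
  have h₁ : R ^ ((n : ℝ) - lam) * R ^ (lam - n) = 1 := by
    rw [← Real.rpow_add hR, sub_add_sub_cancel', sub_self, Real.rpow_zero]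
  have h₂ : r ^ n / r ^ ((n : ℝ) - lam) = r ^ lam := by
    rw [← Real.rpow_natCast, ← Real.rpow_sub hr]
    ring_nf
  calc (4 * R / r) ^ ((n : ℝ) - lam) * (r ^ n * R ^ (lam - n))
      = 4 ^ ((n : ℝ) - lam) * (R ^ ((n : ℝ) - lam) * R ^ (lam - n)) *
          (r ^ n / r ^ ((n : ℝ) - lam)) := by
        rw [Real.div_rpow (by positivity) hr.le, Real.mul_rpow (by norm_num) hR.le]
        ring
    _ = _ := by rw [h₁, h₂, mul_one]

section Morrey

variable {n : ℕ} {lam : ℝ}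

lemma ofReal_rpow_mul_ofReal_rpow_neg {r : ℝ} (hr : 0 < r) (a : ℝ) :
    ENNReal.ofReal (r ^ a) * ENNReal.ofReal (r ^ (-a)) = 1 := by
  rw [← ENNReal.ofReal_mul (by positivity), ← Real.rpow_add hr, add_neg_cancel, Real.rpow_zero,
    ENNReal.ofReal_one]

lemma lintegral_ball_le_morreyNorm {p : ℝ} (hp : 0 < p) (u f : Euc n → ℝ) (x : Euc n) {r : ℝ}
    (hr : 0 < r) : ∫⁻ y in ball x r, ENNReal.ofReal (|f y| ^ p * u y) ≤
      morreyNorm n p lam u f ^ p * ENNReal.ofReal (r ^ lam) := by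
  have hle : (ENNReal.ofReal (r ^ (-lam)) * ∫⁻ y in ball x r, ENNReal.ofReal (|f y| ^ p * u y)) ^
      (1 / p) ≤ morreyNorm n p lam u f :=
    le_iSup₂_of_le x r (le_iSup_of_le hr le_rfl)
  rw [one_div, ENNReal.rpow_inv_le_iff hp] at hle
  calc ∫⁻ y in ball x r, ENNReal.ofReal (|f y| ^ p * u y)
      = ENNReal.ofReal (r ^ lam) * (ENNReal.ofReal (r ^ (-lam)) *
          ∫⁻ y in ball x r, ENNReal.ofReal (|f y| ^ p * u y)) := by
        rw [← mul_assoc, ofReal_rpow_mul_ofReal_rpow_neg hr, one_mul]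
    _ ≤ ENNReal.ofReal (r ^ lam) * morreyNorm n p lam u f ^ p := by gcongr
    _ = _ := mul_comm _ _

lemma lintegral_ball_le_morreyNorm_one (u f : Euc n → ℝ) (x : Euc n) {r : ℝ} (hr : 0 < r) :
    ∫⁻ y in ball x r, ENNReal.ofReal (|f y| * u y) ≤
      morreyNorm n 1 lam u f * ENNReal.ofReal (r ^ lam) := by
  simpa using lintegral_ball_le_morreyNorm one_pos u f x hr

variable [NeZero n]

lemma lintegral_ball_abs_le_morreyNorm (hlam : lam ≤ n) (f : Euc n → ℝ) (z : Euc n) {ρ : ℝ}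
    (hρ : 0 < ρ) : ∫⁻ v in ball z ρ, ENNReal.ofReal |f v| ≤
      morreyNorm n 1 lam (powerWeight n (lam - n)) f *
        ENNReal.ofReal ((ρ + ‖z‖) ^ (n - lam) * ρ ^ lam) := by
  calc ∫⁻ v in ball z ρ, ENNReal.ofReal |f v|
      ≤ ENNReal.ofReal ((ρ + ‖z‖) ^ (-(lam - n))) *
          ∫⁻ v in ball z ρ, ENNReal.ofReal (|f v| * powerWeight n (lam - n) v) :=
        lintegral_ball_le_mul_lintegral_mul_powerWeight (by linarith) f z ρ
    _ ≤ ENNReal.ofReal ((ρ + ‖z‖) ^ (n - lam)) *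
          (morreyNorm n 1 lam (powerWeight n (lam - n)) f * ENNReal.ofReal (ρ ^ lam)) := by
        rw [neg_sub]
        gcongr
        exact lintegral_ball_le_morreyNorm_one _ f z hρ
    _ = _ := by
        rw [ENNReal.ofReal_mul (by positivity)]
        ring

lemma maximal_indicator_compl_ball_le (hlam : lam ≤ n) (f : Euc n → ℝ) {x₀ : Euc n} {r : ℝ}
    (hr : 0 < r) {y : Euc n} (hy : y ∈ ball x₀ r) :
    maximal n ((ball x₀ (2 * r))ᶜ.indicator f) y ≤
      morreyNorm n 1 lam (powerWeight n (lam - n)) f *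
        ENNReal.ofReal ((4 * (r + ‖x₀‖) / r) ^ (n - lam)) * (volume (ball (0 : Euc n) 1))⁻¹ := by
  set N := morreyNorm n 1 lam (powerWeight n (lam - n)) f
  set S := (4 * (r + ‖x₀‖) / r) ^ (n - lam)
  set V₁ := volume (ball (0 : Euc n) 1)
  have hV₁ : V₁ ≠ 0 := (measure_ball_pos volume _ one_pos).ne'
  refine iSup_le fun z => iSup_le fun ρ => iSup_le fun hρ => iSup_le fun hyz => ?_
  by_cases hcase : ball z ρ ⊆ ball x₀ (2 * r)
  · have hzero : ∫⁻ v in ball z ρ, ENNReal.ofReal |(ball x₀ (2 * r))ᶜ.indicator f v| = 0 := by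
      rw [setLIntegral_congr_fun measurableSet_ball (g := fun _ => 0) fun v hv => by
        simp [indicator_of_notMem (notMem_compl_iff.2 (hcase hv))], lintegral_zero]
    simp [hzero]
  have hz := add_norm_le_of_not_ball_subset_ball hr hy hyz hcase
  have hreal : (ρ + ‖z‖) ^ (n - lam) * ρ ^ lam ≤ S * ρ ^ n := by
    calc (ρ + ‖z‖) ^ (n - lam) * ρ ^ lam ≤ (4 * (r + ‖x₀‖) / r * ρ) ^ (n - lam) * ρ ^ lam := by
          gcongr
      _ = S * ρ ^ n := by
          rw [Real.mul_rpow (by positivity) hρ.le, mul_assoc, ← Real.rpow_add hρ, sub_add_cancel,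
            Real.rpow_natCast]
  rw [ENNReal.inv_mul_le_iff (measure_ball_pos volume z hρ).ne' measure_ball_lt_top.ne,
    volume_ball_eq z hρ]
  calc ∫⁻ v in ball z ρ, ENNReal.ofReal |(ball x₀ (2 * r))ᶜ.indicator f v|
      ≤ ∫⁻ v in ball z ρ, ENNReal.ofReal |f v| := lintegral_mono fun v => ENNReal.ofReal_le_ofReal
        (by simpa only [Real.norm_eq_abs] using norm_indicator_le_norm_self f v)
    _ ≤ N * ENNReal.ofReal ((ρ + ‖z‖) ^ (n - lam) * ρ ^ lam) :=
        lintegral_ball_abs_le_morreyNorm hlam f z hρ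
    _ ≤ N * ENNReal.ofReal (S * ρ ^ n) := by gcongr
    _ = N * ENNReal.ofReal S * (V₁ * V₁⁻¹) * ENNReal.ofReal (ρ ^ n) := by
        rw [ENNReal.mul_inv_cancel hV₁ measure_ball_lt_top.ne, ENNReal.ofReal_mul (by positivity)]
        ring
    _ = ENNReal.ofReal (ρ ^ n) * V₁ * (N * ENNReal.ofReal S * V₁⁻¹) := by ring

theorem exists_mul_wInt_maximal_indicator_compl_le (hlam0 : 0 < lam) (hlam : lam < n) :
    ∃ C : ℝ≥0∞, C ≠ ⊤ ∧ ∀ (f : Euc n → ℝ) (x₀ : Euc n) (r : ℝ), 0 < r → ∀ c : ℝ≥0∞,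
      c * wInt n (powerWeight n (lam - n))
          {y ∈ ball x₀ r | c < maximal n ((ball x₀ (2 * r))ᶜ.indicator f) y} ≤
        C * morreyNorm n 1 lam (powerWeight n (lam - n)) f * ENNReal.ofReal (r ^ lam) := by
  obtain ⟨C, hC, hball⟩ := exists_wInt_ball_powerWeight_le (n := n) (s := lam - n)
    (by linarith) (by linarith)
  set V₁ := volume (ball (0 : Euc n) 1)
  have hV₁ : V₁ ≠ 0 := (measure_ball_pos volume _ one_pos).ne'
  refine ⟨ENNReal.ofReal (4 ^ ((n : ℝ) - lam)) * V₁⁻¹ * C, ENNReal.mul_ne_top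
    (ENNReal.mul_ne_top ENNReal.ofReal_ne_top (ENNReal.inv_ne_top.2 hV₁)) hC,
    fun f x₀ r hr c => ?_⟩
  set N := morreyNorm n 1 lam (powerWeight n (lam - n)) f
  set S := (4 * (r + ‖x₀‖) / r) ^ ((n : ℝ) - lam)
  have hreal : S * (r ^ n * (r + ‖x₀‖) ^ (lam - n)) = 4 ^ ((n : ℝ) - lam) * r ^ lam :=
    four_mul_div_rpow_mul_pow_mul_rpow hr (by positivity) n lam
  calc c * wInt n (powerWeight n (lam - n))
        {y ∈ ball x₀ r | c < maximal n ((ball x₀ (2 * r))ᶜ.indicator f) y}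
      ≤ N * ENNReal.ofReal S * V₁⁻¹ * wInt n (powerWeight n (lam - n)) (ball x₀ r) :=
        mul_wInt_sep_lt_le (fun y hy => maximal_indicator_compl_ball_le hlam.le f hr hy) c
    _ ≤ N * ENNReal.ofReal S * V₁⁻¹ * (C * ENNReal.ofReal (r ^ n * (r + ‖x₀‖) ^ (lam - n))) := by
        gcongr
        exact hball x₀ r hr
    _ = V₁⁻¹ * C * N * ENNReal.ofReal (S * (r ^ n * (r + ‖x₀‖) ^ (lam - n))) := by
        rw [ENNReal.ofReal_mul (p := S) (by positivity)]
        ring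
    _ = _ := by
        rw [hreal, ENNReal.ofReal_mul (by positivity)]
        ring

theorem exists_mul_wInt_maximal_indicator_le (hlam0 : 0 < lam) (hlam : lam < n) :
    ∃ C : ℝ≥0∞, C ≠ ⊤ ∧ ∀ f : Euc n → ℝ,
      morreyNorm n 1 lam (powerWeight n (lam - n)) f ≠ ⊤ →
      ∀ (x₀ : Euc n) (r : ℝ), 0 < r → ∀ c : ℝ≥0∞, c ≠ 0 →
      c * wInt n (powerWeight n (lam - n))
          {y | c < maximal n ((ball x₀ (2 * r)).indicator f) y} ≤
        C * morreyNorm n 1 lam (powerWeight n (lam - n)) f * ENNReal.ofReal (r ^ lam) := by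
  obtain ⟨K, hK, hA₁⟩ := exists_isA1OnEnlargedBalls_powerWeight (n := n) (s := lam - n)
    (by linarith) (by linarith)
  refine ⟨K * ENNReal.ofReal (2 ^ lam), ENNReal.mul_ne_top hK ENNReal.ofReal_ne_top,
    fun f hN x₀ r hr c hc => ?_⟩
  set N := morreyNorm n 1 lam (powerWeight n (lam - n)) f
  have h2r : 0 < 2 * r := by positivity
  have hloc : ∀ φ : ℝ → ℝ → ℝ, φ 0 = 0 → ∀ v,
      ENNReal.ofReal (φ |(ball x₀ (2 * r)).indicator f v| ‖v‖) =
        (ball x₀ (2 * r)).indicator (fun v => ENNReal.ofReal (φ |f v| ‖v‖)) v := by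
    intro φ hφ v
    by_cases hv : v ∈ ball x₀ (2 * r) <;> simp [hv, hφ]
  have hfin : ∫⁻ v, ENNReal.ofReal |(ball x₀ (2 * r)).indicator f v| ≠ ⊤ := by
    rw [funext (hloc (fun a _ => a) rfl), lintegral_indicator measurableSet_ball]
    exact ne_top_of_le_ne_top (ENNReal.mul_ne_top hN ENNReal.ofReal_ne_top)
      (lintegral_ball_abs_le_morreyNorm hlam.le f x₀ h2r)
  calc c * wInt n (powerWeight n (lam - n)) {y | c < maximal n ((ball x₀ (2 * r)).indicator f) y}
      ≤ K * ∫⁻ v, ENNReal.ofReal (|(ball x₀ (2 * r)).indicator f v| * powerWeight n (lam - n) v) :=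
        hA₁.weakType_maximal hK hfin hc
    _ = K * ∫⁻ v in ball x₀ (2 * r), ENNReal.ofReal (|f v| * powerWeight n (lam - n) v) := by
        rw [funext (hloc (fun a b => a * b ^ (lam - n)) (zero_mul _)),
          lintegral_indicator measurableSet_ball]
    _ ≤ K * (N * ENNReal.ofReal ((2 * r) ^ lam)) := by
        gcongr
        exact lintegral_ball_le_morreyNorm_one _ f x₀ h2r
    _ = _ := by
        rw [Real.mul_rpow (by norm_num) hr.le, ENNReal.ofReal_mul (by positivity)]
        ring

theorem exists_mul_wInt_maximal_le (hlam0 : 0 < lam) (hlam : lam < n) :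
    ∃ C : ℝ≥0∞, C ≠ ⊤ ∧ ∀ f : Euc n → ℝ,
      morreyNorm n 1 lam (powerWeight n (lam - n)) f ≠ ⊤ →
      ∀ (x₀ : Euc n) (r : ℝ), 0 < r → ∀ t : ℝ, 0 < t →
      ENNReal.ofReal t * wInt n (powerWeight n (lam - n))
          {y ∈ ball x₀ r | ENNReal.ofReal t < maximal n f y} ≤
        C * morreyNorm n 1 lam (powerWeight n (lam - n)) f * ENNReal.ofReal (r ^ lam) := by
  obtain ⟨C₁, hC₁, hnear⟩ := exists_mul_wInt_maximal_indicator_le (n := n) hlam0 hlam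
  obtain ⟨C₂, hC₂, hfar⟩ := exists_mul_wInt_maximal_indicator_compl_le (n := n) hlam0 hlam
  refine ⟨2 * (C₁ + C₂), ENNReal.mul_ne_top ENNReal.ofNat_ne_top (ENNReal.add_ne_top.2 ⟨hC₁, hC₂⟩),
    fun f hN x₀ r hr t ht => ?_⟩
  set u := powerWeight n (lam - n)
  set N := morreyNorm n 1 lam u f
  set c := ENNReal.ofReal (t / 2)
  have htwo : ENNReal.ofReal t = 2 * c := by
    rw [← ENNReal.ofReal_ofNat 2, ← ENNReal.ofReal_mul zero_le_two]
    ring_nf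
  rw [htwo]
  calc 2 * c * wInt n u {y ∈ ball x₀ r | 2 * c < maximal n f y}
      ≤ 2 * c * (wInt n u {y | c < maximal n ((ball x₀ (2 * r)).indicator f) y} +
          wInt n u {y ∈ ball x₀ r | c < maximal n ((ball x₀ (2 * r))ᶜ.indicator f) y}) := by
        gcongr
        exact (lintegral_mono_set (sep_two_mul_lt_maximal_subset measurableSet_ball f _ c)).trans
          (lintegral_union_le _ _ _)
    _ = 2 * (c * wInt n u {y | c < maximal n ((ball x₀ (2 * r)).indicator f) y} +
          c * wInt n u {y ∈ ball x₀ r | c < maximal n ((ball x₀ (2 * r))ᶜ.indicator f) y}) := by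
        ring
    _ ≤ 2 * (C₁ * N * ENNReal.ofReal (r ^ lam) + C₂ * N * ENNReal.ofReal (r ^ lam)) :=
        mul_le_mul_right (add_le_add
          (hnear f hN x₀ r hr c (ENNReal.ofReal_pos.2 (half_pos ht)).ne') (hfar f x₀ r hr c)) 2
    _ = 2 * (C₁ + C₂) * N * ENNReal.ofReal (r ^ lam) := by ring

end Morrey

/-- the Hardy–Littlewood maximal operator is bounded from `L^{1,λ}(|x|^{λ-n})`
to the weak Morrey space `WL^{1,λ}(|x|^{λ-n})` for `0 < λ < n`. -/
theorem statement19 (n : ℕ) (hn : 1 ≤ n) (lam : ℝ)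
    (hlam0 : 0 < lam) (hlam : lam < (n : ℝ)) :
    ∃ C : ℝ≥0∞, C < ⊤ ∧ ∀ f : Euc n → ℝ, Measurable f →
      morreyNorm n 1 lam (fun x => ‖x‖ ^ (lam - n)) f < ⊤ →
      weakMorreyNormE n 1 lam (fun x => ‖x‖ ^ (lam - n)) (maximal n f) ≤
        C * morreyNorm n 1 lam (fun x => ‖x‖ ^ (lam - n)) f := by
  have : NeZero n := ⟨by omega⟩
  obtain ⟨C, hC, hbound⟩ := exists_mul_wInt_maximal_le hlam0 hlam
  refine ⟨C, hC.lt_top, fun f _ hN => iSup_le fun x₀ => iSup_le fun r => iSup_le fun hr =>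
    iSup_le fun t => iSup_le fun ht => ?_⟩
  rw [div_one, ENNReal.rpow_one, Real.rpow_one, mul_right_comm]
  calc _ ≤ C * morreyNorm n 1 lam (fun x => ‖x‖ ^ (lam - n)) f * ENNReal.ofReal (r ^ lam) *
        ENNReal.ofReal (r ^ (-lam)) := mul_le_mul_left (hbound f hN.ne x₀ r hr t ht) _
    _ = _ := by rw [mul_assoc, ofReal_rpow_mul_ofReal_rpow_neg hr, mul_one]
end
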